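/- arXiv:2004.00593 — 3 statements merged into one kernel-verified Lean document; each statement's English description precedes it below -/
import Mathlib

section
/- Let G be a connected graph, let D₀, D₁, … be the distance classes of G with respect to an arbitrary fixed vertex of G (D_k is the set of vertices at distance exactly k from that vertex), and let n ≥ 1. Then for every infinite set U ⊆ D_n, the induced subgraph G[D₀ ∪ … ∪ D_n] contains a star attached to U. -/
/-! Basic notions for the theory of stars and combs in infinite graphs. -/

universe u

open SimpleGraph

namespace StarsCombs

variable {V : Type u} {ι : Type u}

/-- A ray in the graph `G`: an injective sequence of consecutively adjacent vertices. -/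
def IsRay (G : SimpleGraph V) (r : ℕ → V) : Prop :=
  Function.Injective r ∧ ∀ n, G.Adj (r n) (r (n + 1))

/-- The vertex `v` dominates the ray `r` in `G`: there is an infinite `v`–`(R − v)` fan,
i.e. infinitely many paths from `v` to pairwise distinct vertices of the ray other than `v`,
each meeting the ray only in its last vertex, and pairwise meeting only in `v`. -/
def Dominates (G : SimpleGraph V) (v : V) (r : ℕ → V) : Prop :=
  ∃ (t : ℕ → ℕ) (p : ∀ n, G.Walk v (r (t n))),
    Function.Injective t ∧ (∀ n, r (t n) ≠ v) ∧ (∀ n, (p n).IsPath) ∧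
    (∀ n w, w ∈ (p n).support → w ≠ v → w ∈ Set.range r → w = r (t n)) ∧
    (∀ m n, m ≠ n → ∀ w, w ∈ (p m).support → w ∈ (p n).support → w = v)

/-- A ray is undominated if no vertex dominates it. -/
def Undominated (G : SimpleGraph V) (r : ℕ → V) : Prop := ∀ v, ¬ Dominates G v r

/-- A comb attached to `U`: the union of a ray (the spine) with infinitely many pairwise
disjoint finite paths, possibly trivial, that have precisely their first vertex on the spine;
the last vertices of those paths (the teeth) all lie in `U`. -/
structure Comb (G : SimpleGraph V) (U : Set V) where
  spine : ℕ → V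
  spine_ray : IsRay G spine
  start : ℕ → ℕ
  tooth : ℕ → V
  tooth_mem : ∀ n, tooth n ∈ U
  path : ∀ n, G.Walk (spine (start n)) (tooth n)
  path_isPath : ∀ n, (path n).IsPath
  meets_spine : ∀ n w, w ∈ (path n).support → w ∈ Set.range spine → w = spine (start n)
  paths_disjoint : ∀ m n, m ≠ n → ∀ w, w ∈ (path m).support → w ∉ (path n).support

/-- A subdivided infinite star attached to `U`: a centre together with infinitely many
nontrivial paths from the centre to pairwise distinct leaves in `U`, any two of which meet
exactly in the centre. -/
structure Star (G : SimpleGraph V) (U : Set V) where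
  center : V
  leaf : ℕ → V
  leaf_mem : ∀ n, leaf n ∈ U
  leaf_ne : ∀ n, leaf n ≠ center
  path : ∀ n, G.Walk center (leaf n)
  path_isPath : ∀ n, (path n).IsPath
  paths_disjoint : ∀ m n, m ≠ n → ∀ w, w ∈ (path m).support → w ∈ (path n).support → w = center

/-- `G` contains a comb attached to `U`. -/
def HasComb (G : SimpleGraph V) (U : Set V) : Prop := Nonempty (Comb G U)

/-- `G` contains a star attached to `U`. -/
def HasStar (G : SimpleGraph V) (U : Set V) : Prop := Nonempty (Star G U)

/-- `G` contains a dominated comb attached to `U`: a comb attached to `U` whose spine is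
dominated by some vertex. -/
def HasDominatedComb (G : SimpleGraph V) (U : Set V) : Prop :=
  ∃ c : Comb G U, ∃ v, Dominates G v c.spine

/-- Two rays are equivalent (belong to the same end of `G`): for every finite vertex set `X`,
tails of the two rays lie in the same component of `G − X`. -/
def EquivRays (G : SimpleGraph V) (r s : ℕ → V) : Prop :=
  ∀ X : Set V, X.Finite → ∃ (m n : ℕ) (p : G.Walk (r m) (s n)),
    (∀ w ∈ p.support, w ∉ X) ∧ (∀ k, m ≤ k → r k ∉ X) ∧ (∀ k, n ≤ k → s k ∉ X)

/-- The end of the ray `r` lies in the closure of `U` in `G`: there is a comb attached to `U`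
whose spine is equivalent to `r`.  (As a predicate on rays, this describes the set `∂_Ω U` of
ends of `G` lying in the closure of `U`.) -/
def InClosure (G : SimpleGraph V) (U : Set V) (r : ℕ → V) : Prop :=
  ∃ c : Comb G U, EquivRays G c.spine r

/-- A vertex set is dispersed if there is no comb attached to it. -/
def Dispersed (G : SimpleGraph V) (D : Set V) : Prop := ¬ HasComb G D

/-! ### Rooted trees and normal trees inside a graph -/

/-- A rooted tree `T ⊆ G`: a subgraph of `G` that is a tree, with a root. -/
structure RootedTree (G : SimpleGraph V) where
  sub : G.Subgraph
  root : V
  root_mem : root ∈ sub.verts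
  isTree : sub.coe.IsTree

namespace RootedTree

variable {G : SimpleGraph V}

/-- The tree-order of a rooted tree: `x ≤ y` iff `x` lies on the (unique) path in the tree
from the root to `y`. -/
def tle (T : RootedTree G) (x y : V) : Prop :=
  ∃ (hx : x ∈ T.sub.verts) (hy : y ∈ T.sub.verts),
    ∀ p : T.sub.coe.Walk ⟨T.root, T.root_mem⟩ ⟨y, hy⟩, p.IsPath →
      (⟨x, hx⟩ : T.sub.verts) ∈ p.support

/-- A rooted tree `T ⊆ G` is normal in `G` if the endvertices of every `T`-path in `G`
(a nontrivial path meeting `T` exactly in its endvertices) are comparable in the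
tree-order of `T`. -/
def IsNormal (T : RootedTree G) : Prop :=
  ∀ ⦃a b : V⦄ (p : G.Walk a b), p.IsPath → 0 < p.length →
    a ∈ T.sub.verts → b ∈ T.sub.verts →
    (∀ w ∈ p.support, w ≠ a → w ≠ b → w ∉ T.sub.verts) →
    (T.tle a b ∨ T.tle b a)

/-- A ray of the tree `T`. -/
def IsRayIn (T : RootedTree G) (r : ℕ → V) : Prop :=
  Function.Injective r ∧ ∀ n, T.sub.Adj (r n) (r (n + 1))

/-- A normal ray of `T`: a ray of `T` starting at the root. -/
def IsNormalRay (T : RootedTree G) (r : ℕ → V) : Prop :=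
  T.IsRayIn r ∧ r 0 = T.root

/-- `T` contains `U` cofinally: `U ⊆ V(T)` and every node of `T` lies below some element
of `U` in the tree-order. -/
def ContainsCofinally (T : RootedTree G) (U : Set V) : Prop :=
  U ⊆ T.sub.verts ∧ ∀ t ∈ T.sub.verts, ∃ u ∈ U, T.tle t u

/-- `T` is rayless. -/
def Rayless (T : RootedTree G) : Prop := ¬ ∃ r, T.IsRayIn r

/-- `T` is locally finite. -/
def LocallyFinite (T : RootedTree G) : Prop := ∀ v, {w | T.sub.Adj v w}.Finite

/-- `T` is a spanning tree. -/
def Spanning (T : RootedTree G) : Prop := T.sub.verts = Set.univ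

end RootedTree

/-- Every component of `G − S` has finite neighbourhood (in `S`). -/
def CompFiniteNbhd (G : SimpleGraph V) (S : Set V) : Prop :=
  ∀ C : G.ComponentCompl S, {v ∈ S | ∃ w ∈ C.supp, G.Adj v w}.Finite

/-! ### Abstract (decomposition) trees -/

/-- Tree-order of the tree `T` with root `root`: `x ≤ y` iff `x` lies on every
root–`y` path. -/
def treeLE (T : SimpleGraph ι) (root x y : ι) : Prop :=
  ∀ p : T.Walk root y, p.IsPath → x ∈ p.support

/-- `k` lies on the same side of the edge `ij` as `j` (there is a `j`–`k` walk
avoiding `i`). -/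
def SameSide (T : SimpleGraph ι) (i j k : ι) : Prop :=
  ∃ p : T.Walk j k, i ∉ p.support

/-- The oriented edge `(i, j)` of the tree `T` points away from the root. -/
def PointsAway (T : SimpleGraph ι) (root i j : ι) : Prop :=
  T.Adj i j ∧ treeLE T root i j

/-- A ray of the (abstract) tree `T`. -/
def IsTreeRay (T : SimpleGraph ι) (R : ℕ → ι) : Prop :=
  Function.Injective R ∧ ∀ n, T.Adj (R n) (R (n + 1))

/-- The tree `T` is rayless. -/
def RaylessTree (T : SimpleGraph ι) : Prop := ¬ ∃ R, IsTreeRay T R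

/-- The tree `T` is locally finite. -/
def LocallyFiniteTree (T : SimpleGraph ι) : Prop := ∀ t, {s | T.Adj t s}.Finite

/-- `t` is a leaf of the tree `T` (it has at most one neighbour). -/
def IsLeafNode (T : SimpleGraph ι) (t : ι) : Prop := {s | T.Adj t s}.Subsingleton

/-- The sequence `r` eventually lies in `S`. -/
def EventuallyIn (r : ℕ → V) (S : Set V) : Prop := ∃ N, ∀ n, N ≤ n → r n ∈ S

/-- Two rays share a tail (and hence belong to the same end of a tree). -/
def ShareTail {α : Type*} (R S : ℕ → α) : Prop := ∃ m n, ∀ k, R (m + k) = S (n + k)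

/-- The natural order on oriented edges of a tree: `(i,j) ≤ (k,l)` iff they are equal or
there is a `j`–`k` path avoiding both `i` and `l`. -/
def OEdgeLE (T : SimpleGraph ι) (i j k l : ι) : Prop :=
  (i = k ∧ j = l) ∨ ∃ p : T.Walk j k, p.IsPath ∧ i ∉ p.support ∧ l ∉ p.support

/-! ### Tree-decompositions -/

/-- A tree-decomposition of `G` with decomposition tree on node set `ι`. -/
structure TreeDecomp (G : SimpleGraph V) (ι : Type u) where
  tree : SimpleGraph ι
  isTree : tree.IsTree
  part : ι → Set V
  covers : ∀ v : V, ∃ i, v ∈ part i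
  covers_adj : ∀ ⦃u v : V⦄, G.Adj u v → ∃ i, u ∈ part i ∧ v ∈ part i
  parts_connected : ∀ (v : V) (i j : ι), v ∈ part i → v ∈ part j →
    ∀ p : tree.Walk i j, p.IsPath → ∀ k ∈ p.support, v ∈ part k

namespace TreeDecomp

variable {G : SimpleGraph V} (D : TreeDecomp G ι)

/-- The separator (adhesion set) associated with the edge `ij` of the decomposition tree. -/
def sep (i j : ι) : Set V := D.part i ∩ D.part j

/-- All separators are finite. -/
def FinSeps : Prop := ∀ i j, D.tree.Adj i j → (D.sep i j).Finite

/-- All separators are connected (they induce connected subgraphs of `G`). -/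
def ConnSeps : Prop := ∀ i j, D.tree.Adj i j → (G.induce (D.sep i j)).Connected

/-- The separators are pairwise disjoint. -/
def PairwiseDisjointSeps : Prop :=
  ∀ i j k l, D.tree.Adj i j → D.tree.Adj k l → s(i, j) ≠ s(k, l) →
    Disjoint (D.sep i j) (D.sep k l)

/-- The union of the parts on the `j`-side of the edge `ij`. -/
def sideSet (i j : ι) : Set V := {v | ∃ k, SameSide D.tree i j k ∧ v ∈ D.part k}

/-- The end of `G` represented by the ray `r` lives at node `t`: for every edge of the
decomposition tree, `r` eventually lies on the side of the edge containing `t`. -/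
def LivesAt (r : ℕ → V) (t : ι) : Prop :=
  ∀ i j, D.tree.Adj i j → SameSide D.tree i j t → EventuallyIn r (D.sideSet i j)

/-- The end of `G` represented by the ray `r` corresponds to the end of the decomposition
tree represented by the tree-ray `R`. -/
def CorrespondsTo (r : ℕ → V) (R : ℕ → ι) : Prop :=
  ∀ n, EventuallyIn r (D.sideSet (R n) (R (n + 1)))

/-- The tree-decomposition displays the set `Ψ` of ends of `G` (given as a predicate on
rays, closed under equivalence): the canonical map sends ends not in `Ψ` to nodes of the
tree, and restricts to a bijection between `Ψ` and the set of ends of the tree. -/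
def Displays (Ψ : (ℕ → V) → Prop) : Prop :=
  (∀ r, IsRay G r → ¬ Ψ r → ∃ t, D.LivesAt r t) ∧
  (∀ r, IsRay G r → Ψ r → ∃ R, IsTreeRay D.tree R ∧ D.CorrespondsTo r R) ∧
  (∀ r s R R', IsRay G r → IsRay G s → Ψ r → Ψ s →
    IsTreeRay D.tree R → IsTreeRay D.tree R' →
    D.CorrespondsTo r R → D.CorrespondsTo s R' →
    (EquivRays G r s ↔ ShareTail R R')) ∧
  (∀ R, IsTreeRay D.tree R → ∃ r, IsRay G r ∧ Ψ r ∧ D.CorrespondsTo r R)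

end TreeDecomp

/-- A rooted tree-decomposition. -/
structure RootedTreeDecomp (G : SimpleGraph V) (ι : Type u) extends TreeDecomp G ι where
  root : ι

namespace RootedTreeDecomp

variable {G : SimpleGraph V} (D : RootedTreeDecomp G ι)

/-- The separators are upwards disjoint: for every two distinct edges `e < f` pointing away
from the root, the associated separators are disjoint. -/
def UpwardsDisjointSeps : Prop :=
  ∀ i j k l, PointsAway D.tree D.root i j → PointsAway D.tree D.root k l →
    (i, j) ≠ (k, l) → treeLE D.tree D.root j k →
    Disjoint (D.sep i j) (D.sep k l)

/-- The separators are essentially disjoint: some set `F` of edges of the decomposition tree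
meets every ray of the tree infinitely often and the separators associated with the edges in
`F` are upwards disjoint. -/
def EssentiallyDisjointSeps : Prop :=
  ∃ F : Set (ι × ι),
    (∀ e ∈ F, PointsAway D.tree D.root e.1 e.2) ∧
    (∀ R, IsTreeRay D.tree R →
      {n | (R n, R (n + 1)) ∈ F ∨ (R (n + 1), R n) ∈ F}.Infinite) ∧
    (∀ e f, e ∈ F → f ∈ F → e ≠ f → treeLE D.tree D.root e.2 f.1 →
      Disjoint (D.sep e.1 e.2) (D.sep f.1 f.2))

/-- The tree-decomposition covers `W` cofinally: every vertex of `W` lies in some part, and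
the set of nodes whose parts meet `W` is cofinal in the tree-order. -/
def CoversCofinally (W : Set V) : Prop :=
  (∀ w ∈ W, ∃ t, w ∈ D.part t) ∧
  ∀ t, ∃ s, treeLE D.tree D.root t s ∧ (D.part s ∩ W).Nonempty

end RootedTreeDecomp

/-! ### `S_ℵ₀`-trees -/

/-- A (rooted) `S_ℵ₀`-tree over `G`: a tree together with a map from oriented edges to
separations of `G` of finite order, commuting with reversal and order-preserving.  The
oriented edge `(i, j)` is mapped to the separation `(B j i, B i j)`, where `B i j` is the
side towards `j`. -/
structure SepTree (G : SimpleGraph V) (ι : Type u) where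
  tree : SimpleGraph ι
  isTree : tree.IsTree
  root : ι
  B : ι → ι → Set V
  union_eq : ∀ i j, tree.Adj i j → B i j ∪ B j i = Set.univ
  isSep : ∀ i j, tree.Adj i j → ∀ u v, G.Adj u v →
    u ∈ B i j \ B j i → v ∉ B j i \ B i j
  finOrder : ∀ i j, tree.Adj i j → (B i j ∩ B j i).Finite
  mono : ∀ i j k l, tree.Adj i j → tree.Adj k l → OEdgeLE tree i j k l → B k l ⊆ B i j

namespace SepTree

variable {G : SimpleGraph V} (S : SepTree G ι)

/-- The separator of the edge `ij`. -/
def sep (i j : ι) : Set V := S.B i j ∩ S.B j i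

/-- Upwards disjoint separators. -/
def UpwardsDisjointSeps : Prop :=
  ∀ i j k l, PointsAway S.tree S.root i j → PointsAway S.tree S.root k l →
    (i, j) ≠ (k, l) → treeLE S.tree S.root j k → Disjoint (S.sep i j) (S.sep k l)

/-- Upwards connected: for every edge pointing away from the root, the big side induces a
connected subgraph. -/
def UpwardsConnected : Prop :=
  ∀ i j, PointsAway S.tree S.root i j → (G.induce (S.B i j)).Connected

/-- The end represented by the ray `r` corresponds to the end of the tree represented by the
tree-ray `R`: for every oriented edge of the ray pointing away from the root, with associated
separation `(A, B)`, the end lives in `G[B \ A]`. -/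
def CorrespondsTo (r : ℕ → V) (R : ℕ → ι) : Prop :=
  ∀ n, PointsAway S.tree S.root (R n) (R (n + 1)) →
    EventuallyIn r (S.B (R n) (R (n + 1)) \ S.B (R (n + 1)) (R n))

/-- The end represented by `r` lives at the node `t`. -/
def LivesAt (r : ℕ → V) (t : ι) : Prop :=
  ∀ i j, S.tree.Adj i j → SameSide S.tree i j t →
    EventuallyIn r (S.B i j \ S.B j i)

/-- The `S_ℵ₀`-tree displays the set `Ψ` of ends of `G`. -/
def Displays (Ψ : (ℕ → V) → Prop) : Prop :=
  (∀ r, IsRay G r → ¬ Ψ r → ∃ t, S.LivesAt r t) ∧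
  (∀ r, IsRay G r → Ψ r → ∃ R, IsTreeRay S.tree R ∧ S.CorrespondsTo r R) ∧
  (∀ r s R R', IsRay G r → IsRay G s → Ψ r → Ψ s →
    IsTreeRay S.tree R → IsTreeRay S.tree R' →
    S.CorrespondsTo r R → S.CorrespondsTo s R' →
    (EquivRays G r s ↔ ShareTail R R')) ∧
  (∀ R, IsTreeRay S.tree R → ∃ r, IsRay G r ∧ Ψ r ∧ S.CorrespondsTo r R)

end SepTree


/-! Induction on `n`. Every vertex of `Dₙ₊₁` has a neighbour in `Dₙ`; choose one for each
vertex of `U`. Either one of the chosen neighbours is chosen infinitely often, and it is the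
centre of a star of single edges, or infinitely many are chosen, and a star attached to them
in `G[D₀ ∪ … ∪ Dₙ]` extends to `U` by one edge at each leaf. -/

lemma exists_adj_dist_eq_of_dist_eq_succ {G : SimpleGraph V} {v u : V} {n : ℕ}
    (h : G.dist v u = n + 1) : ∃ w, G.Adj w u ∧ G.dist v w = n := by
  have hr : G.Reachable v u := Reachable.of_dist_ne_zero (by rw [h]; omega)
  obtain ⟨p, hp⟩ := hr.exists_walk_length_eq_dist
  cases hq : p.reverse with
  | nil => simp at h
  | @cons _ w _ hadj q =>
    have hqlen : q.length = n := by
      have := congrArg Walk.length hq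
      simp only [Walk.length_reverse, hp, h, Walk.length_cons] at this
      omega
    have hle : G.dist v w ≤ n := by simpa [hqlen] using dist_le q.reverse
    refine ⟨w, hadj.symm, ?_⟩
    have := hadj.symm.diff_dist_adj (u := v)
    omega

namespace Star

variable {G : SimpleGraph V} {U : Set V}

def SupportedIn (s : Star G U) (S : Set V) : Prop :=
  ∀ k, ∀ w ∈ (s.path k).support, w ∈ S

lemma SupportedIn.mono {s : Star G U} {S T : Set V} (hs : s.SupportedIn S) (hST : S ⊆ T) :
    s.SupportedIn T :=
  fun k w hw => hST (hs k w hw)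

lemma leaf_injective (s : Star G U) : Function.Injective s.leaf := by
  intro m k hmk
  by_contra hne
  refine s.leaf_ne m (s.paths_disjoint m k hne _ (s.path m).end_mem_support ?_)
  rw [hmk]
  exact (s.path k).end_mem_support

def induce (s : Star G U) {S : Set V} (hs : s.SupportedIn S) :
    Star (G.induce S) (Subtype.val ⁻¹' U) where
  center := ⟨s.center, hs 0 _ (s.path 0).start_mem_support⟩
  leaf k := ⟨s.leaf k, hs k _ (s.path k).end_mem_support⟩
  leaf_mem k := s.leaf_mem k
  leaf_ne k h := s.leaf_ne k (congrArg Subtype.val h)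
  path k := (s.path k).induce S (hs k)
  path_isPath k := Walk.IsPath.of_map (f := (Embedding.induce S).toHom)
    (by rw [Walk.map_induce]; exact s.path_isPath k)
  paths_disjoint m k hmk w hwm hwk :=
    Subtype.ext (s.paths_disjoint m k hmk w (by simpa using hwm) (by simpa using hwk))

lemma exists_supportedIn_of_infinite_neighborSet_inter {c : V}
    (h : (G.neighborSet c ∩ U).Infinite) : ∃ s : Star G U, s.SupportedIn (insert c U) := by
  let e := h.natEmbedding
  have hadj (k : ℕ) : G.Adj c (e k) := (e k).2.1
  refine ⟨{
    center := c
    leaf k := e k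
    leaf_mem k := (e k).2.2
    leaf_ne k := (hadj k).ne'
    path k := (hadj k).toWalk
    path_isPath k := by simp [Adj.toWalk, (hadj k).ne]
    paths_disjoint m k hmk w hwm hwk := ?_ }, ?_⟩
  · simp only [Adj.support_toWalk, List.mem_cons, List.not_mem_nil, or_false] at hwm hwk
    rcases hwm with rfl | rfl
    · rfl
    · exact hwk.resolve_right fun h => hmk (e.injective (Subtype.ext h))
  · intro k w hw
    simp only [Adj.support_toWalk, List.mem_cons, List.not_mem_nil, or_false] at hw
    rcases hw with rfl | rfl
    exacts [Set.mem_insert _ _, Set.mem_insert_of_mem _ (e k).2.2]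

lemma exists_extend {W : Set V} (s : Star G W) {S : Set V} (hs : s.SupportedIn S) {g : V → V}
    (hW : W ⊆ g '' U) (hadj : ∀ u ∈ U, G.Adj (g u) u) (hUS : Disjoint U S) :
    ∃ s' : Star G U, s'.SupportedIn (S ∪ U) := by
  choose u huU hgu using fun k => hW (s.leaf_mem k)
  have hleaf_adj (k : ℕ) : G.Adj (s.leaf k) (u k) := by
    rw [← hgu k]
    exact hadj _ (huU k)
  have hu_not_mem (m k : ℕ) : u m ∉ (s.path k).support :=
    fun h => hUS.notMem_of_mem_left (huU m) (hs k _ h)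
  refine ⟨{
    center := s.center
    leaf := u
    leaf_mem := huU
    leaf_ne k h := hu_not_mem k k (by rw [h]; exact (s.path k).start_mem_support)
    path k := (s.path k).concat (hleaf_adj k)
    path_isPath k := (s.path_isPath k).concat (hu_not_mem k k) _
    paths_disjoint m k hmk w hwm hwk := ?_ }, ?_⟩
  · simp only [Walk.support_concat, List.mem_append, List.mem_singleton] at hwm hwk
    rcases hwm with hwm | rfl
    · rcases hwk with hwk | rfl
      · exact s.paths_disjoint m k hmk w hwm hwk
      · exact absurd hwm (hu_not_mem k m)
    · rcases hwk with hwk | hwk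
      · exact absurd hwk (hu_not_mem m k)
      · exact absurd (s.leaf_injective (by rw [← hgu, ← hgu, hwk])) hmk
  · intro k w hw
    simp only [Walk.support_concat, List.mem_append, List.mem_singleton] at hw
    rcases hw with hw | rfl
    exacts [Or.inl (hs k w hw), Or.inr (huU k)]

end Star

lemma exists_star_supportedIn_dist_le (G : SimpleGraph V) (v₀ : V) {n : ℕ} (hn : 1 ≤ n)
    {U : Set V} (hU : U.Infinite) (hUn : ∀ u ∈ U, G.dist v₀ u = n) :
    ∃ s : Star G U, s.SupportedIn {v | G.dist v₀ v ≤ n} := by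
  induction n, hn using Nat.le_induction generalizing U with
  | base =>
    have hUv₀ : G.neighborSet v₀ ∩ U = U :=
      Set.inter_eq_right.mpr fun u hu => dist_eq_one_iff_adj.mp (hUn u hu)
    obtain ⟨s, hs⟩ := Star.exists_supportedIn_of_infinite_neighborSet_inter (hUv₀ ▸ hU)
    refine ⟨s, hs.mono ?_⟩
    rintro v (rfl | hv)
    exacts [by simp, (hUn v hv).le]
  | succ n _ ih =>
    choose! g hg using fun u hu => exists_adj_dist_eq_of_dist_eq_succ (hUn u hu)
    have hgU : ∀ w ∈ g '' U, G.dist v₀ w = n := by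
      rintro _ ⟨u, hu, rfl⟩
      exact (hg u hu).2
    by_cases hfib : ∃ c ∈ g '' U, (U ∩ g ⁻¹' {c}).Infinite
    · obtain ⟨c, hc, hinf⟩ := hfib
      obtain ⟨s, hs⟩ := Star.exists_supportedIn_of_infinite_neighborSet_inter (c := c)
        (hinf.mono fun u (hu : u ∈ U ∩ g ⁻¹' {c}) =>
          ⟨(hu.2 : g u = c) ▸ (hg u hu.1).1, hu.1⟩)
      refine ⟨s, hs.mono ?_⟩
      rintro v (rfl | hv)
      exacts [(hgU v hc).trans_le n.le_succ, (hUn v hv).le]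
    · push Not at hfib
      have himg : (g '' U).Infinite := fun hfin => hU (hfin.of_finite_fibers g hfib)
      obtain ⟨s, hs⟩ := ih himg hgU
      obtain ⟨s', hs'⟩ := s.exists_extend hs subset_rfl (fun u hu => (hg u hu).1)
        (Set.disjoint_left.mpr fun u hu hle => by simp [hUn u hu] at hle)
      exact ⟨s', hs'.mono (Set.union_subset (fun v hv => Nat.le_succ_of_le hv)
        fun v hv => (hUn v hv).le)⟩

theorem star_in_initial_distance_classes_general {V : Type u} (G : SimpleGraph V)
    (v₀ : V) (n : ℕ) (hn : 1 ≤ n) (U : Set V)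
    (hU : U.Infinite) (hUn : ∀ u ∈ U, G.dist v₀ u = n) :
    HasStar (G.induce {v | G.dist v₀ v ≤ n})
      (Subtype.val ⁻¹' U : Set {v | G.dist v₀ v ≤ n}) := by
  obtain ⟨s, hs⟩ := exists_star_supportedIn_dist_le G v₀ hn hU hUn
  exact ⟨s.induce hs⟩

/-- Let `G` be a connected graph, let `D₀, D₁, …` be the distance classes of `G` with
respect to an arbitrary fixed vertex `v₀`, and let `n ≥ 1`.  Then for every infinite
`U ⊆ Dₙ` the induced subgraph `G[D₀ ∪ … ∪ Dₙ]` contains a star attached to `U`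
(Lemma 2.7). -/
theorem star_in_initial_distance_classes {V : Type u} (G : SimpleGraph V)
    (hG : G.Connected) (v₀ : V) (n : ℕ) (hn : 1 ≤ n) (U : Set V)
    (hU : U.Infinite) (hUn : ∀ u ∈ U, G.dist v₀ u = n) :
    HasStar (G.induce {v | G.dist v₀ v ≤ n})
      (Subtype.val ⁻¹' U : Set {v | G.dist v₀ v ≤ n}) :=
  star_in_initial_distance_classes_general G v₀ n hn U hU hUn

end StarsCombs
end

section
/- Let G be any connected graph and let U be any set of vertices of G. Then exactly one of the following holds: (i) G contains a comb attached to U; (ii) G has a rayless tree-decomposition into parts each containing at most finitely many vertices from U and whose parts at non-leaves of the decomposition tree are all finite. Moreover, the tree-decomposition in (ii) can be chosen with connected separators. -/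
/-! Basic notions for the theory of stars and combs in infinite graphs. -/

universe u

open SimpleGraph

namespace SimpleGraph

variable {α : Type*} {G : SimpleGraph α}

lemma IsAcyclic.support_subset_of_isPath (hG : G.IsAcyclic) {a b : α} {p : G.Walk a b}
    (hp : p.IsPath) (q : G.Walk a b) : p.support ⊆ q.support := by
  classical
  obtain rfl : p = q.toPath := congrArg Subtype.val ((hG.subsingleton_path a b).elim ⟨p, hp⟩ _)
  exact q.support_toPath_subset_support

lemma IsAcyclic.eq_of_adj_of_walk (hG : G.IsAcyclic) {x y₁ y₂ : α} (h₁ : G.Adj x y₁)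
    (h₂ : G.Adj x y₂) (p : G.Walk y₁ y₂) (hx : x ∉ p.support) : y₁ = y₂ := by
  classical
  have hpath : (Walk.cons h₁ p.toPath.val).IsPath :=
    (Walk.cons_isPath_iff _ _).2 ⟨p.toPath.2, fun h => hx (p.support_toPath_subset_support h)⟩
  have := hG.eq_snd_of_adj_start hpath h₂ (Walk.end_mem_support _)
  simpa using this.symm

lemma exists_walk_of_adj_succ (s : ℕ → α) {n : ℕ} (h : ∀ k < n, G.Adj (s k) (s (k + 1))) :
    ∃ p : G.Walk (s 0) (s n), ∀ z ∈ p.support, ∃ k ≤ n, s k = z := by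
  induction n with
  | zero => exact ⟨.nil, fun z hz => ⟨0, le_rfl, by simp_all⟩⟩
  | succ n ih =>
    obtain ⟨p, hp⟩ := ih fun k hk => h k (by omega)
    refine ⟨p.concat (h n (by omega)), fun z hz => ?_⟩
    rw [Walk.support_concat, List.mem_append, List.mem_singleton] at hz
    rcases hz with hz | rfl
    · obtain ⟨k, hk, rfl⟩ := hp z hz
      exact ⟨k, by omega, rfl⟩
    · exact ⟨n + 1, le_rfl, rfl⟩

namespace ComponentCompl

variable {V : Type*} {G : SimpleGraph V} {K : Set V} {C : G.ComponentCompl K}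

lemma mem_of_walk {a b : V} (W : G.Walk a b) (ha : a ∈ C) (hW : ∀ z ∈ W.support, z ∉ K) :
    b ∈ C := by
  induction W with
  | nil => exact ha
  | cons h W ih =>
    exact ih (mem_of_adj _ _ ha (hW _ (by simp)) h) fun z hz => hW z (by simp [hz])

lemma exists_walk {a b : V} (ha : a ∈ C) (hb : b ∈ C) :
    ∃ W : G.Walk a b, ∀ z ∈ W.support, z ∈ C := by
  classical
  obtain ⟨W⟩ := ConnectedComponent.exact (ha.2.trans hb.2.symm)
  let W' := W.map (Embedding.induce Kᶜ).toHom
  have hK : ∀ z ∈ W'.support, z ∉ K := fun z hz => by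
    rw [Walk.support_map, List.mem_map] at hz
    obtain ⟨z, -, rfl⟩ := hz
    exact z.2
  exact ⟨W', fun z hz => mem_of_walk (W'.takeUntil z hz) ha fun v hv =>
    hK v (W'.support_takeUntil_subset_support hz hv)⟩

lemma exists_adj_of_walk {x y : V} (hy : y ∈ C) (hx : x ∈ K) (W : G.Walk y x)
    (hW : ∀ z ∈ W.support, z ≠ x → z ∉ K) : ∃ z ∈ C, G.Adj z x := by
  induction W with
  | nil => exact absurd hx (notMem_of_mem hy)
  | @cons y y' x h W ih =>
    by_cases hy' : y' = x
    · exact ⟨y, hy, hy' ▸ h⟩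
    · have hy'K : y' ∉ K := hW y' (by simp) hy'
      exact ih (mem_of_adj _ _ hy hy'K h) hx fun z hz hzx => hW z (by simp [hz]) hzx

end ComponentCompl

end SimpleGraph

namespace StarsCombs

section ParentMap

variable {α : Type*} (f : α → α)

def IsAncestor (x y : α) : Prop := ∃ n, f^[n] y = x

open Classical in
/-- The number of steps from `v` to `r` along `f` (junk value `0` if `r` is never reached). -/
noncomputable def depth (r v : α) : ℕ := if h : IsAncestor f r v then Nat.find h else 0

variable {f} {r v x y z : α}

@[refl]
lemma IsAncestor.refl (x : α) : IsAncestor f x x := ⟨0, rfl⟩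

lemma IsAncestor.trans (h₁ : IsAncestor f x y) (h₂ : IsAncestor f y z) : IsAncestor f x z := by
  obtain ⟨m, rfl⟩ := h₁
  obtain ⟨n, rfl⟩ := h₂
  exact ⟨m + n, Function.iterate_add_apply f m n z⟩

lemma isAncestor_apply (v : α) : IsAncestor f (f v) v := ⟨1, rfl⟩

lemma iterate_depth (h : IsAncestor f r v) : f^[depth f r v] v = r := by
  classical
  rw [depth, dif_pos h]
  exact Nat.find_spec h

lemma depth_le {n : ℕ} (hn : f^[n] v = r) : depth f r v ≤ n := by
  classical
  rw [depth, dif_pos ⟨n, hn⟩]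
  exact Nat.find_le hn

lemma iterate_ne_of_lt_depth {n : ℕ} (hn : n < depth f r v) : f^[n] v ≠ r := by
  classical
  have h : IsAncestor f r v := by
    by_contra h
    rw [depth, dif_neg h] at hn
    omega
  rw [depth, dif_pos h] at hn
  exact Nat.find_min h hn

lemma depth_self : depth f r r = 0 := Nat.le_zero.1 (depth_le (n := 0) rfl)

lemma depth_eq_zero_iff (h : IsAncestor f r v) : depth f r v = 0 ↔ v = r :=
  ⟨fun h0 => by simpa [h0] using iterate_depth h, fun h => h ▸ depth_self⟩

lemma depth_iterate (h : IsAncestor f r v) {n : ℕ} (hn : n ≤ depth f r v) :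
    depth f r (f^[n] v) = depth f r v - n := by
  have h' : f^[depth f r v - n] (f^[n] v) = r := by
    rw [← Function.iterate_add_apply, Nat.sub_add_cancel hn, iterate_depth h]
  have hle := depth_le h'
  have hge : depth f r v ≤ depth f r (f^[n] v) + n := depth_le <| by
    rw [Function.iterate_add_apply, iterate_depth ⟨_, h'⟩]
  omega

lemma depth_apply (h : IsAncestor f r v) (hv : v ≠ r) : depth f r (f v) + 1 = depth f r v := by
  have hpos : 0 < depth f r v := Nat.pos_of_ne_zero fun h0 => hv ((depth_eq_zero_iff h).1 h0)
  have := depth_iterate h (n := 1) hpos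
  simp only [Function.iterate_one] at this
  omega

lemma iterate_of_depth_le (hr : f r = r) (h : IsAncestor f r v) {n : ℕ}
    (hn : depth f r v ≤ n) : f^[n] v = r := by
  obtain ⟨k, rfl⟩ := Nat.exists_eq_add_of_le hn
  rw [add_comm, Function.iterate_add_apply, iterate_depth h, Function.iterate_fixed hr]

lemma IsAncestor.iterate_depth_sub (hr : f r = r) (hxv : IsAncestor f x v)
    (h : IsAncestor f r v) :
    f^[depth f r v - depth f r x] v = x ∧ depth f r x ≤ depth f r v := by
  obtain ⟨n, rfl⟩ := hxv
  rcases le_or_gt n (depth f r v) with hn | hn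
  · rw [depth_iterate h hn, Nat.sub_sub_self hn]
    exact ⟨rfl, Nat.sub_le _ _⟩
  · rw [iterate_of_depth_le hr h hn.le, depth_self, Nat.sub_zero, iterate_depth h]
    exact ⟨rfl, Nat.zero_le _⟩

lemma IsAncestor.depth_le (hr : f r = r) (hxv : IsAncestor f x v) (h : IsAncestor f r v) :
    depth f r x ≤ depth f r v :=
  (hxv.iterate_depth_sub hr h).2

lemma IsAncestor.eq_of_depth_eq (hr : f r = r) (hx : IsAncestor f x v) (hy : IsAncestor f y v)
    (h : IsAncestor f r v) (hd : depth f r x = depth f r y) : x = y := by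
  rw [← (hx.iterate_depth_sub hr h).1, ← (hy.iterate_depth_sub hr h).1, hd]

lemma IsAncestor.depth_lt (hr : f r = r) (hxv : IsAncestor f x v) (h : IsAncestor f r v)
    (hne : x ≠ v) : depth f r x < depth f r v := by
  obtain ⟨h₁, h₂⟩ := hxv.iterate_depth_sub hr h
  refine lt_of_le_of_ne h₂ fun hd => hne ?_
  rwa [hd, Nat.sub_self, Function.iterate_zero_apply, eq_comm] at h₁

lemma finite_setOf_isAncestor (hr : f r = r) (h : IsAncestor f r v) :
    {x | IsAncestor f x v}.Finite := by
  refine ((Set.finite_Iic (depth f r v)).image fun i => f^[i] v).subset ?_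
  rintro x hx
  exact ⟨_, Set.mem_Iic.2 (Nat.sub_le _ _), (hx.iterate_depth_sub hr h).1⟩

lemma iterate_eq_of_eqOn {g : α → α} {s : Set α} (hf : Set.MapsTo f s s) (hfg : Set.EqOn f g s)
    (hv : v ∈ s) (n : ℕ) : g^[n] v = f^[n] v := by
  induction n with
  | zero => rfl
  | succ n ih =>
    rw [Function.iterate_succ_apply', Function.iterate_succ_apply', ih, hfg (hf.iterate n hv)]

lemma IsAncestor.of_eqOn {g : α → α} {s : Set α} (hf : Set.MapsTo f s s)
    (hfg : Set.EqOn f g s) (hy : y ∈ s) (h : IsAncestor f x y) : IsAncestor g x y := by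
  obtain ⟨n, rfl⟩ := h
  exact ⟨n, iterate_eq_of_eqOn hf hfg hy n⟩

end ParentMap

section ParentGraph

open SimpleGraph

variable {α : Type*} {f : α → α} {r : α}

def parentGraph (f : α → α) : SimpleGraph α where
  Adj x y := x ≠ y ∧ (f x = y ∨ f y = x)
  symm := ⟨fun _ _ h => ⟨h.1.symm, h.2.symm⟩⟩
  loopless := ⟨fun _ h => h.1 rfl⟩

lemma parentGraph_adj {x y : α} : (parentGraph f).Adj x y ↔ x ≠ y ∧ (f x = y ∨ f y = x) :=
  Iff.rfl

lemma parentGraph_adj_apply {x : α} (hx : f x ≠ x) : (parentGraph f).Adj x (f x) :=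
  ⟨hx.symm, Or.inl rfl⟩

lemma parentGraph_apply_eq_of_adj (hr : f r = r) {x y : α} (h : (parentGraph f).Adj x y)
    (hy : IsAncestor f r y) (hd : depth f r y ≤ depth f r x) : f x = y := by
  rw [parentGraph_adj] at h
  refine h.2.resolve_right fun hyx => ?_
  have hyr : y ≠ r := by
    rintro rfl
    exact h.1 (hyx.symm.trans hr)
  have := depth_apply hy hyr
  rw [hyx] at this
  omega

lemma exists_parentGraph_walk_iterate {v : α} (hv : IsAncestor f r v) {n : ℕ}
    (hn : n ≤ depth f r v) :
    ∃ p : (parentGraph f).Walk v (f^[n] v), ∀ z ∈ p.support, ∃ k ≤ n, f^[k] v = z :=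
  exists_walk_of_adj_succ (fun k => f^[k] v) fun k hk => by
    have hne : f^[k] v ≠ r := iterate_ne_of_lt_depth (by omega)
    rw [Function.iterate_succ_apply']
    refine parentGraph_adj_apply fun hfix => hne ?_
    calc f^[k] v = f^[depth f r v - k] (f^[k] v) := (Function.iterate_fixed hfix _).symm
      _ = r := by
        rw [← Function.iterate_add_apply, Nat.sub_add_cancel (by omega), iterate_depth hv]

lemma parentGraph_connected (hroot : ∀ v, IsAncestor f r v) : (parentGraph f).Connected := by
  have hreach (v : α) : (parentGraph f).Reachable v r := by
    obtain ⟨p, -⟩ := exists_parentGraph_walk_iterate (hroot v) le_rfl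
    exact ⟨p.copy rfl (iterate_depth (hroot v))⟩
  have : Nonempty α := ⟨r⟩
  exact Connected.mk fun x y => (hreach x).trans (hreach y).symm

lemma parentGraph_isAcyclic (hr : f r = r) (hroot : ∀ v, IsAncestor f r v) :
    (parentGraph f).IsAcyclic := by
  classical
  -- Both neighbours of a deepest vertex of a cycle would be its parent.
  intro v c hc
  obtain ⟨x, hx, hmax⟩ := c.support.toFinset.exists_max_image (depth f r)
    ⟨v, List.mem_toFinset.2 c.start_mem_support⟩
  rw [List.mem_toFinset] at hx
  have hc' := (Walk.isCycle_rotate hx).2 hc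
  have hmem {z : α} (hz : z ∈ (c.rotate x hx).support) : depth f r z ≤ depth f r x :=
    hmax z (List.mem_toFinset.2 ((Walk.mem_support_rotate_iff c x hx).1 hz))
  have hsnd := parentGraph_apply_eq_of_adj hr ((c.rotate x hx).adj_snd hc'.not_nil) (hroot _)
    (hmem (Walk.getVert_mem_support _ 1))
  have hpen := parentGraph_apply_eq_of_adj hr ((c.rotate x hx).adj_penultimate hc'.not_nil).symm
    (hroot _) (hmem (Walk.getVert_mem_support _ _))
  exact hc'.snd_ne_penultimate (hsnd.symm.trans hpen)

lemma parentGraph_isTree (hr : f r = r) (hroot : ∀ v, IsAncestor f r v) :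
    (parentGraph f).IsTree :=
  ⟨parentGraph_connected hroot, parentGraph_isAcyclic hr hroot⟩

lemma exists_parentGraph_walk_of_isAncestor (hr : f r = r) (hroot : ∀ v, IsAncestor f r v)
    {x y : α} (h : IsAncestor f x y) :
    ∃ p : (parentGraph f).Walk y x, ∀ z ∈ p.support, IsAncestor f x z := by
  obtain ⟨h₁, -⟩ := h.iterate_depth_sub hr (hroot y)
  obtain ⟨p, hp⟩ := exists_parentGraph_walk_iterate (hroot y) (Nat.sub_le _ (depth f r x))
  refine ⟨p.copy rfl h₁, fun z hz => ?_⟩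
  obtain ⟨k, hk, rfl⟩ := hp z (by simpa using hz)
  refine ⟨depth f r y - depth f r x - k, ?_⟩
  rw [← Function.iterate_add_apply, Nat.sub_add_cancel hk, h₁]

/-- The descendants of a node form a subtree of the parent graph. -/
lemma IsAncestor.of_mem_support_isPath (hr : f r = r) (hroot : ∀ v, IsAncestor f r v)
    {x i j : α} (hi : IsAncestor f x i) (hj : IsAncestor f x j)
    {p : (parentGraph f).Walk i j} (hp : p.IsPath) {z : α} (hz : z ∈ p.support) :
    IsAncestor f x z := by
  obtain ⟨pi, hpi⟩ := exists_parentGraph_walk_of_isAncestor hr hroot hi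
  obtain ⟨pj, hpj⟩ := exists_parentGraph_walk_of_isAncestor hr hroot hj
  have := (parentGraph_isAcyclic hr hroot).support_subset_of_isPath hp (pi.append pj.reverse) hz
  rw [Walk.mem_support_append_iff, Walk.support_reverse, List.mem_reverse] at this
  exact this.elim (hpi z) (hpj z)

lemma IsTreeRay.eventually_apply_succ (hr : f r = r) (hroot : ∀ v, IsAncestor f r v)
    {R : ℕ → α} (hR : IsTreeRay (parentGraph f) R) :
    ∃ N, ∀ n, N ≤ n → f (R (n + 1)) = R n := by
  -- After one step up, a step down would revisit a vertex; steps down decrease the depth.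
  by_cases hup : ∃ N, f (R (N + 1)) = R N
  · obtain ⟨N, hN⟩ := hup
    refine ⟨N, fun n hn => ?_⟩
    induction n, hn using Nat.le_induction with
    | base => exact hN
    | succ k _ ih =>
      refine (parentGraph_adj.1 (hR.2 (k + 1))).2.resolve_left fun h => ?_
      rw [ih] at h
      exact absurd (hR.1 h) (by omega)
  · push Not at hup
    have hdown (n : ℕ) : f (R n) = R (n + 1) := (parentGraph_adj.1 (hR.2 n)).2.resolve_right (hup n)
    have hdepth (n : ℕ) : depth f r (R n) + n ≤ depth f r (R 0) := by
      induction n with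
      | zero => simp
      | succ k ih =>
        have hne : R k ≠ r := fun h => (hR.2 k).ne (by rw [← hdown k, h, hr])
        have := depth_apply (hroot (R k)) hne
        rw [hdown k] at this
        omega
    have := hdepth (depth f r (R 0) + 1)
    omega

end ParentGraph

section Rayless

open SimpleGraph

variable {ι : Type*} {T : SimpleGraph ι}

lemma exists_isTreeRay_of_forall_extend {z : ι} (P : ∀ x, T.Walk z x → Prop) (h₀ : P z .nil)
    (hext : ∀ x (p : T.Walk z x), P x p → ∃ y, ∃ h : T.Adj x y, y ∉ p.support ∧ P y (p.concat h)) :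
    ∃ R, IsTreeRay T R := by
  let S := Σ' (x : ι) (p : T.Walk z x), P x p
  have hstep (s : S) : ∃ s' : S, T.Adj s.1 s'.1 ∧ s'.1 ∉ s.2.1.support ∧
      s.2.1.support ⊆ s'.2.1.support := by
    obtain ⟨y, h, hy, hP⟩ := hext s.1 s.2.1 s.2.2
    exact ⟨⟨y, _, hP⟩, h, hy, by simp [Walk.support_concat]⟩
  choose g hadj hnew hsub using hstep
  let s (k : ℕ) : S := g^[k] ⟨z, .nil, h₀⟩
  have hs (k : ℕ) : s (k + 1) = g (s k) := Function.iterate_succ_apply' g k _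
  have hmem {j k : ℕ} (hjk : j ≤ k) : (s j).1 ∈ (s k).2.1.support := by
    induction k, hjk using Nat.le_induction with
    | base => exact Walk.end_mem_support _
    | succ k _ ih => exact hs k ▸ hsub _ ih
  refine ⟨fun k => (s k).1, fun i j hij => ?_, fun k => by simpa only [hs k] using hadj (s k)⟩
  simp only at hij
  by_contra hne
  wlog hlt : i < j generalizing i j
  · exact this j i hij.symm (Ne.symm hne) (by omega)
  obtain ⟨k, rfl⟩ := Nat.exists_eq_add_of_lt hlt
  have := hmem (j := i) (k := i + k) (by omega)
  rw [hij, hs] at this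
  exact hnew _ this

def SeparatesInfinitely (T : SimpleGraph ι) (t : ℕ → ι) (x : ι) : Prop :=
  ∃ B : Set ℕ, B.Infinite ∧ ∀ a ∈ B, ∀ b ∈ B, a ≠ b → ∀ W : T.Walk (t a) (t b), x ∈ W.support

/-- If infinitely many `t n` lie beyond the end `x` of the path `p`, then either infinitely
many of them lie beyond one neighbour `y` of `x`, or they are spread over infinitely many
branches at `x`. -/
lemma extend_or_separatesInfinitely (hT : T.IsAcyclic) {t : ℕ → ι}
    (ht : ∀ s, {n | t n = s}.Finite) {z x : ι} (p : T.Walk z x)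
    (hp : {n | ∃ q : T.Walk x (t n), (p.append q).IsPath}.Infinite) :
    (∃ y, {n | ∃ (h : T.Adj x y) (q : T.Walk y (t n)), (p.append (.cons h q)).IsPath}.Infinite) ∨
      (¬ IsLeafNode T x ∧ SeparatesInfinitely T t x) := by
  set E : ι → Set ℕ := fun y =>
    {n | ∃ (h : T.Adj x y) (q : T.Walk y (t n)), (p.append (.cons h q)).IsPath}
  set A := {n | ∃ q : T.Walk x (t n), (p.append q).IsPath} \ {n | t n = x}
  have hfirst : ∀ n ∈ A, ∃ y, n ∈ E y := by
    rintro n ⟨⟨q, hq⟩, hn⟩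
    cases q with
    | nil => exact absurd rfl hn
    | cons h q => exact ⟨_, h, q, hq⟩
  have : Nonempty ι := ⟨x⟩
  choose! y hy using hfirst
  by_cases hfib : ∃ y₀, (A ∩ y ⁻¹' {y₀}).Infinite
  · obtain ⟨y₀, hy₀⟩ := hfib
    refine Or.inl ⟨y₀, hy₀.mono ?_⟩
    rintro n ⟨hnA, hn : y n = y₀⟩
    exact hn ▸ hy n hnA
  push Not at hfib
  have hyA : (y '' A).Infinite := fun hfin =>
    (hp.sdiff (ht x)) (Set.Finite.of_finite_fibers y hfin fun w _ => hfib w)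
  obtain ⟨B, hBA, hB⟩ := Set.exists_subset_bijOn A y
  have hBinf : B.Infinite := Set.Infinite.of_image y (hB.image_eq ▸ hyA)
  have hadj {n : ℕ} (hn : n ∈ B) : T.Adj x (y n) := (hy n (hBA hn)).1
  refine Or.inr ⟨fun hleaf => ?_, B, hBinf, fun a ha b hb hab W => ?_⟩
  · obtain ⟨a, ha, b, hb, hab⟩ := hBinf.nontrivial
    exact hab (hB.injOn ha hb (hleaf (hadj ha) (hadj hb)))
  · by_contra hxW
    obtain ⟨_, qa, hqa⟩ := hy a (hBA ha)
    obtain ⟨_, qb, hqb⟩ := hy b (hBA hb)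
    have hxa := ((Walk.cons_isPath_iff _ _).1 hqa.of_append_right).2
    have hxb := ((Walk.cons_isPath_iff _ _).1 hqb.of_append_right).2
    refine hab (hB.injOn ha hb (hT.eq_of_adj_of_walk (hadj ha) (hadj hb)
      (qa.append (W.append qb.reverse)) ?_))
    simp only [Walk.mem_support_append_iff, Walk.support_reverse, List.mem_reverse]
    tauto

lemma exists_separatesInfinitely (hT : T.IsTree) (hrl : RaylessTree T) {t : ℕ → ι}
    (ht : ∀ s, {n | t n = s}.Finite) : ∃ x, ¬ IsLeafNode T x ∧ SeparatesInfinitely T t x := by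
  classical
  -- Otherwise, following branches that contain infinitely many `t n` builds a ray.
  by_contra hsep
  refine hrl (exists_isTreeRay_of_forall_extend (z := t 0)
    (fun x p => {n | ∃ q : T.Walk x (t n), (p.append q).IsPath}.Infinite) ?_ ?_)
  · refine Set.infinite_univ.mono fun n _ => ?_
    obtain ⟨q⟩ := hT.connected.preconnected (t 0) (t n)
    exact ⟨q.toPath, by simp⟩
  · intro x p hp
    obtain ⟨y, hy⟩ := (extend_or_separatesInfinitely hT.isAcyclic ht p hp).resolve_right
      fun h => hsep ⟨x, h⟩
    obtain ⟨n, h, q, hq⟩ := hy.nonempty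
    rw [← Walk.concat_append] at hq
    refine ⟨y, h, ((Walk.concat_isPath_iff h).1 hq.of_append_left).2, hy.mono ?_⟩
    rintro m ⟨_, q, hq'⟩
    exact ⟨q, by rwa [Walk.concat_append]⟩

end Rayless

section CombAgainstDecomposition

open SimpleGraph

variable {V ι : Type u} {G : SimpleGraph V} {U : Set V}

namespace Comb

variable (c : Comb G U)

lemma tooth_injective : Function.Injective c.tooth := fun m n h => by
  by_contra hmn
  exact c.paths_disjoint m n hmn _ (c.path m).end_mem_support (by
    rw [h]; exact (c.path n).end_mem_support)

lemma start_injective : Function.Injective c.start := fun m n h => by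
  by_contra hmn
  exact c.paths_disjoint m n hmn _ (c.path m).start_mem_support (by
    rw [h]; exact (c.path n).start_mem_support)

lemma finite_setOf_exists_mem_path {X : Set V} (hX : X.Finite) :
    {m | ∃ x ∈ (c.path m).support, x ∈ X}.Finite := by
  have : Nonempty V := ⟨c.spine 0⟩
  choose! g hg using fun m (hm : m ∈ {m | ∃ x ∈ (c.path m).support, x ∈ X}) => hm
  refine Set.Finite.of_finite_image (f := g) (hX.subset ?_) fun m hm n hn hmn => ?_
  · rintro _ ⟨m, hm, rfl⟩
    exact (hg m hm).2
  · by_contra hne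
    exact c.paths_disjoint m n hne _ (hg m hm).1 (hmn ▸ (hg n hn).1)

lemma exists_spine_walk {i j : ℕ} (hij : i ≤ j) :
    ∃ W : G.Walk (c.spine i) (c.spine j), ∀ z ∈ W.support, ∃ k, i ≤ k ∧ c.spine k = z := by
  obtain ⟨W, hW⟩ := exists_walk_of_adj_succ (fun k => c.spine (i + k)) (n := j - i)
    fun k _ => c.spine_ray.2 (i + k)
  refine ⟨W.copy rfl (by rw [Nat.add_sub_cancel' hij]), fun z hz => ?_⟩
  obtain ⟨k, -, rfl⟩ := hW z (by simpa using hz)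
  exact ⟨i + k, Nat.le_add_right i k, rfl⟩

lemma exists_walk_avoiding {X : Set V} (hX : X.Finite) : ∃ F : Set ℕ, F.Finite ∧
    ∀ a b, a ∉ F → b ∉ F → ∃ W : G.Walk (c.tooth a) (c.tooth b), ∀ z ∈ W.support, z ∉ X := by
  obtain ⟨N, hN⟩ := ((hX.preimage c.spine_ray.1.injOn).bddAbove)
  refine ⟨{m | ∃ x ∈ (c.path m).support, x ∈ X} ∪ c.start ⁻¹' Set.Iic N,
    (c.finite_setOf_exists_mem_path hX).union
      ((Set.finite_Iic N).preimage c.start_injective.injOn), ?_⟩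
  suffices h : ∀ a b, a ∉ _ → b ∉ _ → c.start a ≤ c.start b →
      ∃ W : G.Walk (c.tooth a) (c.tooth b), ∀ z ∈ W.support, z ∉ X by
    intro a b ha hb
    rcases le_total (c.start a) (c.start b) with hab | hba
    · exact h a b ha hb hab
    · obtain ⟨W, hW⟩ := h b a hb ha hba
      exact ⟨W.reverse, fun z hz => hW z (by simpa using hz)⟩
  intro a b ha hb hab
  simp only [Set.mem_union, Set.mem_ofPred_eq, Set.mem_preimage, Set.mem_Iic, not_or,
    not_exists, not_and, not_le] at ha hb
  obtain ⟨S, hS⟩ := c.exists_spine_walk hab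
  refine ⟨(c.path a).reverse.append (S.append (c.path b)), fun z hz hzX => ?_⟩
  simp only [Walk.mem_support_append_iff, Walk.support_reverse, List.mem_reverse] at hz
  rcases hz with hz | hz | hz
  · exact ha.1 z hz hzX
  · obtain ⟨k, hk, rfl⟩ := hS z hz
    exact absurd (hN hzX) (by omega)
  · exact hb.1 z hz hzX

end Comb

namespace TreeDecomp

variable (D : TreeDecomp G ι)

lemma exists_mem_part_of_forall_mem_support {a b w : ι}
    (hw : ∀ p : D.tree.Walk a b, w ∈ p.support) {x y : V} (hx : x ∈ D.part a)
    (hy : y ∈ D.part b) (W : G.Walk x y) : ∃ z ∈ W.support, z ∈ D.part w := by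
  classical
  have hmem {v : V} {a b : ι} (ha : v ∈ D.part a) (hb : v ∈ D.part b)
      (hw : ∀ p : D.tree.Walk a b, w ∈ p.support) : v ∈ D.part w := by
    obtain ⟨p⟩ := D.isTree.connected.preconnected a b
    exact D.parts_connected v a b ha hb p.toPath p.toPath.2 w (hw _)
  induction W generalizing a with
  | nil => exact ⟨_, Walk.start_mem_support _, hmem hx hy hw⟩
  | cons h W ih =>
    obtain ⟨c, hc₁, hc₂⟩ := D.covers_adj h
    by_cases hac : ∀ p : D.tree.Walk a c, w ∈ p.support
    · exact ⟨_, Walk.start_mem_support _, hmem hx hc₁ hac⟩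
    push Not at hac
    obtain ⟨p, hp⟩ := hac
    obtain ⟨z, hz, hzw⟩ := ih (fun q => by simpa [hp] using hw (p.append q)) hc₂ hy
    exact ⟨z, by simp [hz], hzw⟩

lemma not_hasComb (hrl : RaylessTree D.tree) (hU : ∀ t, (D.part t ∩ U).Finite)
    (hfin : ∀ t, ¬ IsLeafNode D.tree t → (D.part t).Finite) : ¬ HasComb G U := by
  rintro ⟨c⟩
  choose t ht using fun n => D.covers (c.tooth n)
  have hfib (s : ι) : {n | t n = s}.Finite :=
    ((hU s).preimage c.tooth_injective.injOn).subset fun n hn => ⟨hn ▸ ht n, c.tooth_mem n⟩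
  obtain ⟨w, hw, B, hB, hsep⟩ := exists_separatesInfinitely D.isTree hrl hfib
  obtain ⟨F, hF, hconn⟩ := c.exists_walk_avoiding (hfin w hw)
  obtain ⟨a, ⟨haB, haF⟩, b, ⟨hbB, hbF⟩, hab⟩ := (hB.sdiff hF).nontrivial
  obtain ⟨W, hW⟩ := hconn a b haF hbF
  obtain ⟨z, hz, hzw⟩ :=
    D.exists_mem_part_of_forall_mem_support (hsep a haB b hbB hab) (ht a) (ht b) W
  exact hW z hz hzw

end TreeDecomp

end CombAgainstDecomposition

section CombFromPaths

variable {V : Type u} {G : SimpleGraph V} {U : Set V}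

lemma hasComb_of_forall_exists_path {ρ : ℕ → V} (hρ : IsRay G ρ) (height : V → ℕ)
    (hpath : ∀ m, ∃ (j : ℕ) (u : V) (P : G.Walk (ρ j) u) (D : ℕ), m < j ∧ u ∈ U ∧ P.IsPath ∧
      (∀ z ∈ P.support, z ∈ Set.range ρ → z = ρ j) ∧
      ∀ z ∈ P.support, j ≤ height z ∧ height z ≤ D) :
    HasComb G U := by
  choose j u P D hj hu hP hmeet hband using hpath
  -- `s` selects a subsequence of paths with pairwise disjoint bands.
  let s : ℕ → ℕ := fun i => Nat.rec 0 (fun _ k => D k) i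
  have hs (i : ℕ) : s (i + 1) = D (s i) := rfl
  have hjD (m : ℕ) : j m ≤ D m := (hband m _ (P m).start_mem_support).1.trans
    (hband m _ (P m).start_mem_support).2
  have hmono : StrictMono s := strictMono_nat_of_lt_succ fun i => by
    rw [hs]; exact (hj (s i)).trans_le (hjD _)
  refine ⟨⟨ρ, hρ, fun i => j (s i), fun i => u (s i), fun i => hu (s i), fun i => P (s i),
    fun i => hP (s i), fun i => hmeet (s i), fun a b hab z hza hzb => ?_⟩⟩
  wlog hlt : a < b generalizing a b
  · exact this b a hab.symm hzb hza (by omega)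
  have h₁ := (hband _ z hza).2
  have h₂ := (hband _ z hzb).1
  have h₃ : s (a + 1) ≤ s b := hmono.monotone hlt
  have h₄ := hj (s b)
  rw [hs] at h₃
  omega

end CombFromPaths

section NormalTree

open SimpleGraph

variable {V : Type u} {G : SimpleGraph V} {U : Set V} {r : V}

/-- A normal tree in `G` with root `r`, given by its vertex set and a parent map, in which
every vertex other than the root lies below some vertex of `U`. -/
structure NormalTree (G : SimpleGraph V) (U : Set V) (r : V) where
  verts : Set V
  parent : V → V
  root_mem : r ∈ verts
  parent_root : parent r = r
  parent_mem : ∀ v ∈ verts, parent v ∈ verts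
  adj_parent : ∀ v ∈ verts, v ≠ r → G.Adj (parent v) v
  isAncestor_root : ∀ v ∈ verts, IsAncestor parent r v
  normal : ∀ x ∈ verts, ∀ y ∈ verts, ∀ W : G.Walk x y,
    (∀ z ∈ W.support, z ≠ x → z ≠ y → z ∉ verts) →
    IsAncestor parent x y ∨ IsAncestor parent y x
  cofinal : ∀ v ∈ verts, v ≠ r → ∃ u ∈ U, u ∈ verts ∧ IsAncestor parent v u

namespace NormalTree

variable (T : NormalTree G U r)

lemma iterate_mem {v : V} (hv : v ∈ T.verts) (n : ℕ) : T.parent^[n] v ∈ T.verts := by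
  induction n with
  | zero => exact hv
  | succ n ih => exact Function.iterate_succ_apply' T.parent n v ▸ T.parent_mem _ ih

lemma mem_of_isAncestor {x v : V} (h : IsAncestor T.parent x v) (hv : v ∈ T.verts) :
    x ∈ T.verts := by
  obtain ⟨n, rfl⟩ := h
  exact T.iterate_mem hv n

lemma exists_isPath_iterate {v : V} (hv : v ∈ T.verts) {n : ℕ}
    (hn : n ≤ depth T.parent r v) : ∃ P : G.Walk (T.parent^[n] v) v, P.IsPath ∧
      ∀ z ∈ P.support, ∃ k ≤ n, T.parent^[k] v = z := by
  classical
  obtain ⟨W, hW⟩ := exists_walk_of_adj_succ (fun k => T.parent^[k] v) (n := n) fun k hk => by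
    rw [Function.iterate_succ_apply']
    exact (T.adj_parent _ (T.iterate_mem hv k) (iterate_ne_of_lt_depth (by omega))).symm
  let P : G.Path (T.parent^[n] v) v := W.reverse.toPath
  refine ⟨P, P.2, fun z hz => hW z ?_⟩
  have := W.reverse.support_toPath_subset_support hz
  rwa [Walk.support_reverse, List.mem_reverse] at this

def IsNormalRay (ρ : ℕ → V) : Prop :=
  ∀ m, ρ m ∈ T.verts ∧ depth T.parent r (ρ m) = m ∧ T.parent (ρ (m + 1)) = ρ m

variable {T}

lemma IsNormalRay.ne_root {ρ : ℕ → V} (hρ : T.IsNormalRay ρ) (m : ℕ) : ρ (m + 1) ≠ r :=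
  fun h => by simpa [h, depth_self] using (hρ (m + 1)).2.1

lemma IsNormalRay.isRay {ρ : ℕ → V} (hρ : T.IsNormalRay ρ) : IsRay G ρ := by
  refine ⟨fun i j h => ?_, fun m => ?_⟩
  · rw [← (hρ i).2.1, ← (hρ j).2.1, h]
  · simpa only [(hρ m).2.2] using T.adj_parent _ (hρ (m + 1)).1 (hρ.ne_root m)

/-- The tooth at `m`: a vertex `u ∈ U` above `ρ (m + 1)`, reached by the tree path from the
highest vertex `ρ j` of the ray below `u`. -/
lemma IsNormalRay.exists_tooth {ρ : ℕ → V} (hρ : T.IsNormalRay ρ) (m : ℕ) :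
    ∃ (j : ℕ) (u : V) (P : G.Walk (ρ j) u) (D : ℕ), m < j ∧ u ∈ U ∧ P.IsPath ∧
      (∀ z ∈ P.support, z ∈ Set.range ρ → z = ρ j) ∧
      ∀ z ∈ P.support, j ≤ depth T.parent r z ∧ depth T.parent r z ≤ D := by
  classical
  obtain ⟨u, huU, hu, hmu⟩ := T.cofinal _ (hρ (m + 1)).1 (hρ.ne_root m)
  have hr := T.parent_root
  have hur := T.isAncestor_root u hu
  have hle {i : ℕ} (hi : IsAncestor T.parent (ρ i) u) : i ≤ depth T.parent r u :=
    (hρ i).2.1 ▸ hi.depth_le hr hur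
  set j := Nat.findGreatest (fun i => IsAncestor T.parent (ρ i) u) (depth T.parent r u)
  have hj : IsAncestor T.parent (ρ j) u :=
    Nat.findGreatest_spec (P := fun i => IsAncestor T.parent (ρ i) u) (hle hmu) hmu
  have hju : j ≤ depth T.parent r u := hle hj
  have hmax {i : ℕ} (hi : IsAncestor T.parent (ρ i) u) : i ≤ j := Nat.le_findGreatest (hle hi) hi
  have hstart : T.parent^[depth T.parent r u - j] u = ρ j := by
    simpa only [(hρ j).2.1] using (hj.iterate_depth_sub hr hur).1
  obtain ⟨P, hP, hPsupp⟩ := T.exists_isPath_iterate hu (n := depth T.parent r u - j)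
    (Nat.sub_le _ _)
  have hdepth {z : V} (hz : z ∈ P.support) : ∃ k ≤ depth T.parent r u - j,
      T.parent^[k] u = z ∧ depth T.parent r z = depth T.parent r u - k := by
    obtain ⟨k, hk, rfl⟩ := hPsupp z hz
    exact ⟨k, hk, rfl, depth_iterate hur (by omega)⟩
  refine ⟨j, u, P.copy hstart rfl, depth T.parent r u, by have := hmax hmu; omega, huU,
    by simpa using hP, fun z hz ⟨i, hi⟩ => ?_, fun z hz => ?_⟩
  · obtain ⟨k, hk, hku, hd⟩ := hdepth (by simpa using hz)
    have hij : j ≤ i := by have := (hρ i).2.1; rw [hi] at this; omega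
    have hji : i ≤ j := hmax (hi ▸ ⟨k, hku⟩)
    rw [← hi, le_antisymm hji hij]
  · obtain ⟨k, hk, -, hd⟩ := hdepth (by simpa using hz)
    omega

lemma IsNormalRay.hasComb {ρ : ℕ → V} (hρ : T.IsNormalRay ρ) : HasComb G U :=
  hasComb_of_forall_exists_path hρ.isRay _ hρ.exists_tooth

variable (T)

lemma exists_isNormalRay_of_strictChain {x : ℕ → V} (hx : ∀ k, x k ∈ T.verts)
    (hchain : ∀ k, IsAncestor T.parent (x k) (x (k + 1)) ∧ x k ≠ x (k + 1)) :
    ∃ ρ, T.IsNormalRay ρ := by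
  have hr := T.parent_root
  have hroot (k : ℕ) := T.isAncestor_root _ (hx k)
  have hdepth (k : ℕ) : k ≤ depth T.parent r (x k) := by
    induction k with
    | zero => exact Nat.zero_le _
    | succ k ih => have := (hchain k).1.depth_lt hr (hroot _) (hchain k).2; omega
  have hanc {m k : ℕ} (hmk : m ≤ k) : IsAncestor T.parent (x m) (x k) := by
    induction k, hmk using Nat.le_induction with
    | base => rfl
    | succ k _ ih => exact ih.trans (hchain k).1
  let ρ (m : ℕ) := T.parent^[depth T.parent r (x m) - m] (x m)
  have hρdepth (m : ℕ) : depth T.parent r (ρ m) = m := by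
    show depth T.parent r (T.parent^[depth T.parent r (x m) - m] (x m)) = m
    rw [depth_iterate (hroot m) (Nat.sub_le _ _)]
    have := hdepth m
    omega
  have hρx {m k : ℕ} (hmk : m ≤ k) : IsAncestor T.parent (ρ m) (x k) :=
    IsAncestor.trans ⟨_, rfl⟩ (hanc hmk)
  refine ⟨ρ, fun m => ⟨T.iterate_mem (hx m) _, hρdepth m, ?_⟩⟩
  have hne : ρ (m + 1) ≠ r := fun h => by simpa [h, depth_self] using hρdepth (m + 1)
  refine ((isAncestor_apply _).trans (hρx le_rfl)).eq_of_depth_eq hr (hρx (Nat.le_succ m))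
    (hroot _) ?_
  have := depth_apply (v := ρ (m + 1)) (T.isAncestor_root _ (T.iterate_mem (hx (m + 1)) _)) hne
  rw [hρdepth] at this
  rw [hρdepth]
  omega

lemma hasComb_of_strictChain {x : ℕ → V} (hx : ∀ k, x k ∈ T.verts)
    (hchain : ∀ k, IsAncestor T.parent (x k) (x (k + 1)) ∧ x k ≠ x (k + 1)) : HasComb G U :=
  (T.exists_isNormalRay_of_strictChain hx hchain).elim fun _ hρ => hρ.hasComb

lemma exists_greatest_of_chain (hnc : ¬ HasComb G U) {S : Set V} (hne : S.Nonempty)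
    (hS : S ⊆ T.verts)
    (hchain : ∀ a ∈ S, ∀ b ∈ S, IsAncestor T.parent a b ∨ IsAncestor T.parent b a) :
    ∃ m ∈ S, ∀ x ∈ S, IsAncestor T.parent x m := by
  by_contra hmax
  push Not at hmax
  have hnext (a : S) : ∃ b : S, IsAncestor T.parent a b ∧ (a : V) ≠ b := by
    obtain ⟨b, hb, hba⟩ := hmax a a.2
    refine ⟨⟨b, hb⟩, (hchain a a.2 b hb).resolve_right hba, fun h => hba ?_⟩
    rw [show (a : V) = b from h]
  choose g hg using hnext
  obtain ⟨a, ha⟩ := hne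
  refine hnc (T.hasComb_of_strictChain (x := fun k => (g^[k] ⟨a, ha⟩ : V))
    (fun k => hS (g^[k] _).2) fun k => ?_)
  simpa only [Function.iterate_succ_apply'] using hg _

end NormalTree

end NormalTree

section Zorn

variable {V : Type u} {G : SimpleGraph V} {U : Set V} {r : V}

namespace NormalTree

instance : Preorder (NormalTree G U r) where
  le T T' := T.verts ⊆ T'.verts ∧ ∀ v ∈ T.verts, T'.parent v = T.parent v
  le_refl _ := ⟨subset_rfl, fun _ _ => rfl⟩
  le_trans _ _ _ h₁ h₂ := ⟨h₁.1.trans h₂.1, fun v hv => (h₂.2 v (h₁.1 hv)).trans (h₁.2 v hv)⟩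

def singleton (G : SimpleGraph V) (U : Set V) (r : V) : NormalTree G U r where
  verts := {r}
  parent := id
  root_mem := rfl
  parent_root := rfl
  parent_mem _ hv := hv
  adj_parent _ hv hne := absurd hv hne
  isAncestor_root _ hv := ⟨0, hv⟩
  normal _ hx _ hy _ _ := Or.inl (hx.trans hy.symm ▸ IsAncestor.refl _)
  cofinal _ hv hne := absurd hv hne

section Chain

variable {c : Set (NormalTree G U r)}

open Classical in
noncomputable def chainParent (c : Set (NormalTree G U r)) (v : V) : V :=
  if h : ∃ T ∈ c, v ∈ T.verts then h.choose.parent v else v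

lemma chainParent_eqOn (hc : IsChain (· ≤ ·) c) {T : NormalTree G U r} (hT : T ∈ c) :
    Set.EqOn T.parent (chainParent c) T.verts := fun v hv => by
  have h : ∃ T ∈ c, v ∈ T.verts := ⟨T, hT, hv⟩
  rw [chainParent, dif_pos h]
  obtain ⟨hT', hv'⟩ := h.choose_spec
  rcases hc.total hT hT' with hle | hle
  · exact (hle.2 v hv).symm
  · exact hle.2 v hv'

lemma exists_mem_verts_of_isChain (hc : IsChain (· ≤ ·) c) {x y : V}
    (hx : x ∈ ⋃ T ∈ c, T.verts) (hy : y ∈ ⋃ T ∈ c, T.verts) :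
    ∃ T ∈ c, x ∈ T.verts ∧ y ∈ T.verts := by
  simp only [Set.mem_iUnion, exists_prop] at hx hy
  obtain ⟨Tx, hTx, hx⟩ := hx
  obtain ⟨Ty, hTy, hy⟩ := hy
  rcases hc.total hTx hTy with hle | hle
  · exact ⟨Ty, hTy, hle.1 hx, hy⟩
  · exact ⟨Tx, hTx, hx, hle.1 hy⟩

noncomputable def ofChain (hc : IsChain (· ≤ ·) c) (hne : c.Nonempty) : NormalTree G U r where
  verts := ⋃ T ∈ c, T.verts
  parent := chainParent c
  root_mem := Set.mem_biUnion hne.some_mem hne.some.root_mem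
  parent_root := (chainParent_eqOn hc hne.some_mem hne.some.root_mem).symm.trans
    hne.some.parent_root
  parent_mem v hv := by
    obtain ⟨T, hT, hv, -⟩ := exists_mem_verts_of_isChain hc hv hv
    exact Set.mem_biUnion hT (chainParent_eqOn hc hT hv ▸ T.parent_mem v hv)
  adj_parent v hv hvr := by
    obtain ⟨T, hT, hv, -⟩ := exists_mem_verts_of_isChain hc hv hv
    exact chainParent_eqOn hc hT hv ▸ T.adj_parent v hv hvr
  isAncestor_root v hv := by
    obtain ⟨T, hT, hv, -⟩ := exists_mem_verts_of_isChain hc hv hv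
    exact (T.isAncestor_root v hv).of_eqOn T.parent_mem (chainParent_eqOn hc hT) hv
  normal x hx y hy W hW := by
    obtain ⟨T, hT, hx, hy⟩ := exists_mem_verts_of_isChain hc hx hy
    exact (T.normal x hx y hy W fun z hz hzx hzy hzT => hW z hz hzx hzy
      (Set.mem_biUnion hT hzT)).imp (·.of_eqOn T.parent_mem (chainParent_eqOn hc hT) hy)
      (·.of_eqOn T.parent_mem (chainParent_eqOn hc hT) hx)
  cofinal v hv hvr := by
    obtain ⟨T, hT, hv, -⟩ := exists_mem_verts_of_isChain hc hv hv
    obtain ⟨u, huU, hu, hvu⟩ := T.cofinal v hv hvr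
    exact ⟨u, huU, Set.mem_biUnion hT hu,
      hvu.of_eqOn T.parent_mem (chainParent_eqOn hc hT) hu⟩

lemma le_ofChain (hc : IsChain (· ≤ ·) c) (hne : c.Nonempty) {T : NormalTree G U r}
    (hT : T ∈ c) : T ≤ ofChain hc hne :=
  ⟨fun _ hv => Set.mem_biUnion hT hv, fun _ hv => (chainParent_eqOn hc hT hv).symm⟩

lemma bddAbove_of_isChain (hc : IsChain (· ≤ ·) c) : BddAbove c := by
  rcases c.eq_empty_or_nonempty with rfl | hne
  · exact ⟨singleton G U r, by simp⟩
  · exact ⟨ofChain hc hne, fun _ hT => le_ofChain hc hne hT⟩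

end Chain

end NormalTree

end Zorn

section Graft

open SimpleGraph

variable {V : Type u} {G : SimpleGraph V} {U : Set V} {r : V}

namespace NormalTree

variable (T : NormalTree G U r) {u t : V} (w : G.Walk u t)

open Classical in
noncomputable def graftParent (v : V) : V :=
  if h : ∃ i < w.length, w.getVert i = v then w.getVert (Nat.find h + 1) else T.parent v

variable {T w}

lemma graftParent_getVert (hw : w.IsPath) {i : ℕ} (hi : i < w.length) :
    T.graftParent w (w.getVert i) = w.getVert (i + 1) := by
  classical
  have h : ∃ j < w.length, w.getVert j = w.getVert i := ⟨i, hi, rfl⟩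
  rw [graftParent, dif_pos h, hw.getVert_injOn (Set.mem_ofPred.2 (Nat.find_spec h).1.le) (Set.mem_ofPred.2 hi.le)
    (Nat.find_spec h).2]

lemma iterate_graftParent_getVert (hw : w.IsPath) {i k : ℕ} (hik : i + k ≤ w.length) :
    (T.graftParent w)^[k] (w.getVert i) = w.getVert (i + k) := by
  induction k with
  | zero => rfl
  | succ k ih =>
    rw [Function.iterate_succ_apply', ih (by omega), graftParent_getVert hw (by omega),
      Nat.add_assoc]

lemma graftParent_eqOn (hnew : ∀ i < w.length, w.getVert i ∉ T.verts) :
    Set.EqOn T.parent (T.graftParent w) T.verts := fun v hv => by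
  classical
  rw [graftParent, dif_neg]
  rintro ⟨i, hi, rfl⟩
  exact hnew i hi hv

lemma isAncestor_graftParent (hnew : ∀ i < w.length, w.getVert i ∉ T.verts) {x v : V}
    (hv : v ∈ T.verts) (h : IsAncestor T.parent x v) : IsAncestor (T.graftParent w) x v :=
  h.of_eqOn T.parent_mem (graftParent_eqOn hnew) hv

lemma isAncestor_graftParent_getVert (hw : w.IsPath) {i j : ℕ} (hij : i ≤ j)
    (hj : j ≤ w.length) : IsAncestor (T.graftParent w) (w.getVert j) (w.getVert i) :=
  ⟨j - i, by rw [iterate_graftParent_getVert hw (by omega), Nat.add_sub_cancel' hij]⟩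

lemma isAncestor_graftParent_of_walk (hw : w.IsPath) (ht : t ∈ T.verts)
    (hnew : ∀ i < w.length, w.getVert i ∉ T.verts)
    (hbelow : ∀ x ∈ T.verts, ∀ i < w.length, ∀ W : G.Walk x (w.getVert i),
      (∀ z ∈ W.support, z ≠ x → z ∉ T.verts) → IsAncestor T.parent x t)
    {x : V} (hx : x ∈ T.verts) {j : ℕ} (hj : j < w.length) (W : G.Walk x (w.getVert j))
    (hW : ∀ z ∈ W.support, z ≠ x → z ≠ w.getVert j → z ∉ T.verts) :
    IsAncestor (T.graftParent w) x (w.getVert j) := by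
  refine (isAncestor_graftParent hnew ht (hbelow x hx j hj W fun z hz hzx => ?_)).trans ?_
  · by_cases hzy : z = w.getVert j
    · exact hzy ▸ hnew j hj
    · exact hW z hz hzx hzy
  · simpa using isAncestor_graftParent_getVert (T := T) hw hj.le le_rfl

noncomputable def graft (hw : w.IsPath) (ht : t ∈ T.verts) (huU : u ∈ U)
    (hnew : ∀ i < w.length, w.getVert i ∉ T.verts)
    (hbelow : ∀ x ∈ T.verts, ∀ i < w.length, ∀ W : G.Walk x (w.getVert i),
      (∀ z ∈ W.support, z ≠ x → z ∉ T.verts) → IsAncestor T.parent x t) :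
    NormalTree G U r where
  verts := T.verts ∪ {v | ∃ i < w.length, w.getVert i = v}
  parent := T.graftParent w
  root_mem := Or.inl T.root_mem
  parent_root := (graftParent_eqOn hnew T.root_mem).symm.trans T.parent_root
  parent_mem v := by
    rintro (hv | ⟨i, hi, rfl⟩)
    · exact Or.inl (graftParent_eqOn hnew hv ▸ T.parent_mem v hv)
    rw [graftParent_getVert hw hi]
    rcases (Nat.succ_le_of_lt hi).lt_or_eq with h | h
    · exact Or.inr ⟨i + 1, h, rfl⟩
    · exact Or.inl (by rw [show i + 1 = w.length from h, Walk.getVert_length]; exact ht)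
  adj_parent v := by
    rintro (hv | ⟨i, hi, rfl⟩) hvr
    · exact graftParent_eqOn hnew hv ▸ T.adj_parent v hv hvr
    · exact graftParent_getVert hw hi ▸ (w.adj_getVert_succ hi).symm
  isAncestor_root v := by
    rintro (hv | ⟨i, hi, rfl⟩)
    · exact isAncestor_graftParent hnew hv (T.isAncestor_root v hv)
    · refine (isAncestor_graftParent hnew ht (T.isAncestor_root t ht)).trans ?_
      simpa using isAncestor_graftParent_getVert (T := T) hw hi.le le_rfl
  normal x hx y hy W hW := by
    have hW' (z : V) (hz : z ∈ W.support) (hzx : z ≠ x) (hzy : z ≠ y) : z ∉ T.verts :=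
      fun hzT => hW z hz hzx hzy (Or.inl hzT)
    rcases hx with hx | ⟨i, hi, rfl⟩ <;> rcases hy with hy | ⟨j, hj, rfl⟩
    · exact (T.normal x hx y hy W hW').imp (isAncestor_graftParent hnew hy)
        (isAncestor_graftParent hnew hx)
    · exact Or.inl (isAncestor_graftParent_of_walk hw ht hnew hbelow hx hj W hW')
    · exact Or.inr (isAncestor_graftParent_of_walk hw ht hnew hbelow hy hi W.reverse
        fun z hz hzy hzx => hW' z (by simpa using hz) hzx hzy)
    · rcases le_total i j with hij | hji
      · exact Or.inr (isAncestor_graftParent_getVert hw hij hj.le)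
      · exact Or.inl (isAncestor_graftParent_getVert hw hji hi.le)
  cofinal v := by
    rintro (hv | ⟨i, hi, rfl⟩) hvr
    · obtain ⟨u', hu'U, hu', hvu'⟩ := T.cofinal v hv hvr
      exact ⟨u', hu'U, Or.inl hu', isAncestor_graftParent hnew hu' hvu'⟩
    · refine ⟨u, huU, Or.inr ⟨0, by omega, w.getVert_zero⟩, ?_⟩
      simpa using isAncestor_graftParent_getVert (T := T) hw (Nat.zero_le i) hi.le

variable {hw : w.IsPath} {ht : t ∈ T.verts} {huU : u ∈ U}
  {hnew : ∀ i < w.length, w.getVert i ∉ T.verts}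
  {hbelow : ∀ x ∈ T.verts, ∀ i < w.length, ∀ W : G.Walk x (w.getVert i),
    (∀ z ∈ W.support, z ≠ x → z ∉ T.verts) → IsAncestor T.parent x t}

lemma le_graft : T ≤ T.graft hw ht huU hnew hbelow :=
  ⟨fun _ hv => Or.inl hv, fun _ hv => (graftParent_eqOn hnew hv).symm⟩

lemma mem_graft : u ∈ (T.graft hw ht huU hnew hbelow).verts := by
  rcases w.length.eq_zero_or_pos with h | h
  · exact Or.inl (by rw [← w.getVert_zero, ← h, w.getVert_length]; exact ht)
  · exact Or.inr ⟨0, h, w.getVert_zero⟩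

end NormalTree

end Graft

section Existence

open SimpleGraph

variable {V : Type u} {G : SimpleGraph V} {U : Set V} {r : V}

namespace NormalTree

variable (T : NormalTree G U r)

lemma isAncestor_total_of_adj_componentCompl (C : G.ComponentCompl T.verts) {a b za zb : V}
    (ha : a ∈ T.verts) (hb : b ∈ T.verts) (hza : za ∈ C) (hzb : zb ∈ C) (haz : G.Adj a za)
    (hbz : G.Adj b zb) : IsAncestor T.parent a b ∨ IsAncestor T.parent b a := by
  obtain ⟨W, hW⟩ := ComponentCompl.exists_walk hza hzb
  refine T.normal a ha b hb (.cons haz (W.concat hbz.symm)) fun z hz hza hzb => ?_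
  simp only [Walk.support_cons, Walk.support_concat, List.mem_cons, List.mem_append,
    List.not_mem_nil, or_false] at hz
  rcases hz with rfl | hz | rfl
  · exact absurd rfl hza
  · exact ComponentCompl.notMem_of_mem (hW z hz)
  · exact absurd rfl hzb

/-- The neighbours in `T` of a component of `G - T` form a chain, which has a greatest
element since `G` has no comb attached to `U`. -/
lemma exists_greatest_neighbour (hG : G.Connected) (hnc : ¬ HasComb G U)
    (C : G.ComponentCompl T.verts) : ∃ t ∈ T.verts, (∃ z ∈ C, G.Adj t z) ∧
      ∀ x ∈ T.verts, ∀ z ∈ C, G.Adj x z → IsAncestor T.parent x t := by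
  have hN : {x ∈ T.verts | ∃ z ∈ C, G.Adj x z}.Nonempty := by
    obtain ⟨⟨z, x⟩, hz, hx, hzx⟩ :=
      ComponentCompl.exists_adj_boundary_pair hG.preconnected ⟨r, T.root_mem⟩ C
    exact ⟨x, hx, z, hz, hzx.symm⟩
  obtain ⟨t, ⟨ht, htC⟩, htmax⟩ := T.exists_greatest_of_chain hnc hN (fun _ h => h.1)
    fun a ⟨ha, za, hza, haz⟩ b ⟨hb, zb, hzb, hbz⟩ =>
      T.isAncestor_total_of_adj_componentCompl C ha hb hza hzb haz hbz
  exact ⟨t, ht, htC, fun x hx z hz hxz => htmax x ⟨hx, z, hz, hxz⟩⟩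

/-- A vertex `u ∈ U` outside `T` can be added to `T` by grafting onto the greatest neighbour
`t` of the component `C` of `u` in `G - T` a path through `C` from `u` to a neighbour of `t`. -/
lemma exists_le_mem (hG : G.Connected) (hnc : ¬ HasComb G U) {u : V} (huU : u ∈ U)
    (hu : u ∉ T.verts) : ∃ T' : NormalTree G U r, T ≤ T' ∧ u ∈ T'.verts := by
  classical
  set C := G.componentComplMk hu
  obtain ⟨t, ht, ⟨z, hzC, htz⟩, htmax⟩ := T.exists_greatest_neighbour hG hnc C
  obtain ⟨W, hW⟩ := ComponentCompl.exists_walk (G.componentComplMk_mem hu) hzC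
  let w : G.Walk u t := W.toPath.1.concat htz.symm
  have hwC (i : ℕ) (hi : i < w.length) : w.getVert i ∈ C := by
    have hi' : i ≤ W.toPath.1.length := by simpa [w] using hi
    simp only [w, Walk.concat_eq_append, Walk.getVert_append', if_pos hi']
    exact hW _ (W.support_toPath_subset_support (Walk.getVert_mem_support _ _))
  have hw : w.IsPath := (Walk.concat_isPath_iff _).2 ⟨W.toPath.2, fun htW =>
    ComponentCompl.notMem_of_mem (hW t (W.support_toPath_subset_support htW)) ht⟩
  refine ⟨T.graft hw ht huU (fun i hi => ComponentCompl.notMem_of_mem (hwC i hi)) ?_,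
    le_graft, mem_graft⟩
  intro x hx i hi W' hW'
  obtain ⟨z', hz'C, hz'x⟩ := ComponentCompl.exists_adj_of_walk (hwC i hi) hx W'.reverse
    fun z hz hzx => hW' z (by simpa using hz) hzx
  exact htmax x hx z' hz'C hz'x.symm

end NormalTree

lemma exists_normalTree_subset_verts (hG : G.Connected) (hnc : ¬ HasComb G U) (r : V) :
    ∃ T : NormalTree G U r, U ⊆ T.verts := by
  obtain ⟨M, hM⟩ := zorn_le (α := NormalTree G U r) fun _ hc => NormalTree.bddAbove_of_isChain hc
  refine ⟨M, fun u huU => ?_⟩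
  by_contra hu
  obtain ⟨T', hle, hu'⟩ := M.exists_le_mem hG hnc huU hu
  exact hu ((hM hle).1 hu')

end Existence

section Decomposition

open SimpleGraph

variable {V : Type u} {G : SimpleGraph V} {U : Set V} {r : V}

namespace NormalTree

variable (T : NormalTree G U r) (top : G.ComponentCompl T.verts → T.verts)

/-- The decomposition tree is `T` with every component `C` of `G - T` attached as a leaf
below `top C`. -/
def decompParent : T.verts ⊕ G.ComponentCompl T.verts → T.verts ⊕ G.ComponentCompl T.verts
  | .inl t => .inl ⟨T.parent t, T.parent_mem t t.2⟩
  | .inr C => .inl (top C)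

def decompPart : T.verts ⊕ G.ComponentCompl T.verts → Set V
  | .inl t => {x | IsAncestor T.parent x t}
  | .inr C => (C : Set V) ∪ {x | IsAncestor T.parent x (top C)}

variable {T top}

lemma iterate_decompParent_inl (t : T.verts) (n : ℕ) :
    (T.decompParent top)^[n] (.inl t) = .inl ⟨T.parent^[n] t, T.iterate_mem t.2 n⟩ := by
  induction n with
  | zero => rfl
  | succ n ih =>
    rw [Function.iterate_succ_apply', ih]
    exact congrArg Sum.inl (Subtype.ext (Function.iterate_succ_apply' T.parent n t).symm)

lemma isAncestor_inl_inl_iff {s t : T.verts} :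
    IsAncestor (T.decompParent top) (.inl s) (.inl t) ↔ IsAncestor T.parent s t := by
  simp only [IsAncestor, iterate_decompParent_inl, Sum.inl.injEq, Subtype.ext_iff]

lemma isAncestor_inl_inr_iff {s : T.verts} {C : G.ComponentCompl T.verts} :
    IsAncestor (T.decompParent top) (.inl s) (.inr C) ↔ IsAncestor T.parent s (top C) := by
  rw [← isAncestor_inl_inl_iff (top := top)]
  refine ⟨fun ⟨n, hn⟩ => ?_, fun ⟨n, hn⟩ => ⟨n + 1, hn⟩⟩
  cases n with
  | zero => exact absurd hn Sum.inr_ne_inl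
  | succ n => exact ⟨n, hn⟩

lemma decompParent_root : T.decompParent top (.inl ⟨r, T.root_mem⟩) = .inl ⟨r, T.root_mem⟩ :=
  congrArg Sum.inl (Subtype.ext T.parent_root)

lemma isAncestor_decompRoot (i : T.verts ⊕ G.ComponentCompl T.verts) :
    IsAncestor (T.decompParent top) (.inl ⟨r, T.root_mem⟩) i := by
  rcases i with t | C
  · exact isAncestor_inl_inl_iff.2 (T.isAncestor_root t t.2)
  · exact isAncestor_inl_inr_iff.2 (T.isAncestor_root _ (top C).2)

lemma mem_decompPart_iff {v : V} (hv : v ∈ T.verts) (i : T.verts ⊕ G.ComponentCompl T.verts) :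
    v ∈ T.decompPart top i ↔ IsAncestor (T.decompParent top) (.inl ⟨v, hv⟩) i := by
  rcases i with t | C
  · exact (isAncestor_inl_inl_iff (s := ⟨v, hv⟩)).symm
  · rw [isAncestor_inl_inr_iff, decompPart, Set.mem_union, or_iff_right]
    · rfl
    · exact fun hvC => ComponentCompl.notMem_of_mem hvC hv

lemma eq_inr_of_mem_decompPart {v : V} (hv : v ∉ T.verts) {i : T.verts ⊕ G.ComponentCompl T.verts}
    (hi : v ∈ T.decompPart top i) : i = .inr (G.componentComplMk hv) := by
  rcases i with t | C
  · exact absurd (T.mem_of_isAncestor hi t.2) hv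
  · rcases hi with hi | hi
    · obtain ⟨_, rfl⟩ := hi
      rfl
    · exact absurd (T.mem_of_isAncestor hi (top C).2) hv

lemma exists_mem_decompPart (v : V) : ∃ i, v ∈ T.decompPart top i := by
  by_cases hv : v ∈ T.verts
  · exact ⟨.inl ⟨v, hv⟩, IsAncestor.refl v⟩
  · exact ⟨.inr (G.componentComplMk hv), Or.inl (G.componentComplMk_mem hv)⟩

lemma exists_adj_mem_decompPart
    (htop : ∀ C, ∀ x ∈ T.verts, ∀ z ∈ C, G.Adj x z → IsAncestor T.parent x (top C))
    {a b : V} (hab : G.Adj a b) : ∃ i, a ∈ T.decompPart top i ∧ b ∈ T.decompPart top i := by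
  by_cases ha : a ∈ T.verts <;> by_cases hb : b ∈ T.verts
  · rcases T.normal a ha b hb (.cons hab .nil) (by simp +contextual) with h | h
    · exact ⟨.inl ⟨b, hb⟩, h, IsAncestor.refl b⟩
    · exact ⟨.inl ⟨a, ha⟩, IsAncestor.refl a, h⟩
  · exact ⟨.inr (G.componentComplMk hb),
      Or.inr (htop _ a ha b (G.componentComplMk_mem hb) hab), Or.inl (G.componentComplMk_mem hb)⟩
  · exact ⟨.inr (G.componentComplMk ha), Or.inl (G.componentComplMk_mem ha),
      Or.inr (htop _ b hb a (G.componentComplMk_mem ha) hab.symm)⟩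
  · refine ⟨.inr (G.componentComplMk ha), Or.inl (G.componentComplMk_mem ha), Or.inl ?_⟩
    rw [G.componentComplMk_eq_of_adj ha hb hab]
    exact G.componentComplMk_mem hb

lemma mem_decompPart_of_mem_support {v : V} {i j : T.verts ⊕ G.ComponentCompl T.verts}
    (hvi : v ∈ T.decompPart top i) (hvj : v ∈ T.decompPart top j)
    {p : (parentGraph (T.decompParent top)).Walk i j} (hp : p.IsPath) {k}
    (hk : k ∈ p.support) : v ∈ T.decompPart top k := by
  by_cases hv : v ∈ T.verts
  · rw [mem_decompPart_iff hv] at hvi hvj ⊢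
    exact hvi.of_mem_support_isPath decompParent_root isAncestor_decompRoot hvj hp hk
  · obtain rfl := eq_inr_of_mem_decompPart hv hvi
    obtain rfl := eq_inr_of_mem_decompPart hv hvj
    rw [Walk.isPath_iff_nil] at hp
    rw [Walk.nil_iff_support_eq.1 hp, List.mem_singleton] at hk
    exact hk ▸ hvi

variable (T top) in
def toTreeDecomp
    (htop : ∀ C, ∀ x ∈ T.verts, ∀ z ∈ C, G.Adj x z → IsAncestor T.parent x (top C)) :
    TreeDecomp G (T.verts ⊕ G.ComponentCompl T.verts) where
  tree := parentGraph (T.decompParent top)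
  isTree := parentGraph_isTree decompParent_root isAncestor_decompRoot
  part := T.decompPart top
  covers := exists_mem_decompPart
  covers_adj _ _ := exists_adj_mem_decompPart htop
  parts_connected _ _ _ hvi hvj _ hp _ := mem_decompPart_of_mem_support hvi hvj hp

lemma raylessTree_decomp (hnc : ¬ HasComb G U) :
    RaylessTree (parentGraph (T.decompParent top)) := by
  rintro ⟨R, hR⟩
  obtain ⟨N, hN⟩ := hR.eventually_apply_succ decompParent_root isAncestor_decompRoot
  have hinl (k : ℕ) : ∃ t : T.verts, R (N + k) = .inl t := by
    rw [← hN (N + k) (by omega)]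
    cases R (N + k + 1) <;> exact ⟨_, rfl⟩
  choose x hx using hinl
  refine hnc (T.hasComb_of_strictChain (x := fun k => (x k : V)) (fun k => (x k).2)
    fun k => ⟨⟨1, ?_⟩, fun h => ?_⟩)
  · have := hN (N + k) (by omega)
    rw [hx k, show N + k + 1 = N + (k + 1) by omega, hx (k + 1)] at this
    exact congrArg Subtype.val (Sum.inl_injective this)
  · have := hR.1 ((hx k).trans ((congrArg Sum.inl (Subtype.ext h)).trans (hx (k + 1)).symm))
    omega

lemma decompPart_inter_finite (hU : U ⊆ T.verts) (i : T.verts ⊕ G.ComponentCompl T.verts) :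
    (T.decompPart top i ∩ U).Finite := by
  rcases i with t | C
  · exact (finite_setOf_isAncestor T.parent_root (T.isAncestor_root t t.2)).subset
      Set.inter_subset_left
  · refine (finite_setOf_isAncestor T.parent_root (T.isAncestor_root _ (top C).2)).subset ?_
    rintro x ⟨hx | hx, hxU⟩
    · exact absurd (hU hxU) (ComponentCompl.notMem_of_mem hx)
    · exact hx

lemma isLeafNode_inr (C : G.ComponentCompl T.verts) :
    IsLeafNode (parentGraph (T.decompParent top)) (.inr C) := by
  have h (s) (hs : (parentGraph (T.decompParent top)).Adj (.inr C) s) : s = .inl (top C) := by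
    refine ((parentGraph_adj.1 hs).2.resolve_right fun h' => ?_).symm
    cases s <;> exact Sum.inl_ne_inr h'
  exact fun s hs s' hs' => (h s hs).trans (h s' hs').symm

lemma decompPart_finite_of_not_isLeafNode {i : T.verts ⊕ G.ComponentCompl T.verts}
    (hi : ¬ IsLeafNode (parentGraph (T.decompParent top)) i) : (T.decompPart top i).Finite := by
  rcases i with t | C
  · exact finite_setOf_isAncestor T.parent_root (T.isAncestor_root t t.2)
  · exact absurd (isLeafNode_inr C) hi

lemma decompPart_decompParent_subset (i : T.verts ⊕ G.ComponentCompl T.verts) :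
    T.decompPart top (T.decompParent top i) ⊆ T.decompPart top i := by
  rcases i with t | C
  · exact fun x hx => IsAncestor.trans hx (isAncestor_apply _)
  · exact fun x hx => Or.inr hx

lemma connected_induce_decompPart_inl (t : T.verts) :
    (G.induce (T.decompPart top (.inl t))).Connected := by
  have hr : r ∈ T.decompPart top (.inl t) := T.isAncestor_root t t.2
  have hreach (x : V) (hx : x ∈ T.decompPart top (.inl t)) :
      (G.induce (T.decompPart top (.inl t))).Reachable ⟨r, hr⟩ ⟨x, hx⟩ := by
    have hxT := T.mem_of_isAncestor hx t.2
    obtain ⟨P, -, hP⟩ := T.exists_isPath_iterate hxT le_rfl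
    refine ⟨(P.copy (iterate_depth (T.isAncestor_root x hxT)) rfl).induce _ fun z hz => ?_⟩
    obtain ⟨k, -, rfl⟩ := hP z (by simpa using hz)
    exact IsAncestor.trans ⟨k, rfl⟩ hx
  have : Nonempty (T.decompPart top (.inl t)) := ⟨⟨r, hr⟩⟩
  exact Connected.mk fun a b => (hreach a a.2).symm.trans (hreach b b.2)

lemma connSeps_toTreeDecomp
    (htop : ∀ C, ∀ x ∈ T.verts, ∀ z ∈ C, G.Adj x z → IsAncestor T.parent x (top C)) :
    (T.toTreeDecomp top htop).ConnSeps := by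
  have hinl (i : T.verts ⊕ G.ComponentCompl T.verts) : ∃ t, T.decompParent top i = .inl t := by
    cases i <;> exact ⟨_, rfl⟩
  intro i j hij
  simp only [TreeDecomp.sep, toTreeDecomp]
  rcases (parentGraph_adj.1 hij).2 with rfl | rfl
  · obtain ⟨t, ht⟩ := hinl i
    rw [Set.inter_eq_right.2 (decompPart_decompParent_subset i), ht]
    exact connected_induce_decompPart_inl t
  · obtain ⟨t, ht⟩ := hinl j
    rw [Set.inter_eq_left.2 (decompPart_decompParent_subset j), ht]
    exact connected_induce_decompPart_inl t

end NormalTree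

theorem exists_treeDecomp_of_not_hasComb (hG : G.Connected) (hnc : ¬ HasComb G U) :
    ∃ (ι : Type u) (D : TreeDecomp G ι), RaylessTree D.tree ∧ (∀ t, (D.part t ∩ U).Finite) ∧
      (∀ t, ¬ IsLeafNode D.tree t → (D.part t).Finite) ∧ D.ConnSeps := by
  obtain ⟨r⟩ := hG.nonempty
  obtain ⟨T, hU⟩ := exists_normalTree_subset_verts hG hnc r
  have htop (C : G.ComponentCompl T.verts) : ∃ t : T.verts,
      ∀ x ∈ T.verts, ∀ z ∈ C, G.Adj x z → IsAncestor T.parent x t := by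
    obtain ⟨t, ht, -, htmax⟩ := T.exists_greatest_neighbour hG hnc C
    exact ⟨⟨t, ht⟩, htmax⟩
  choose top htop using htop
  exact ⟨_, T.toTreeDecomp top htop, T.raylessTree_decomp hnc, T.decompPart_inter_finite hU,
    fun _ => T.decompPart_finite_of_not_isLeafNode, T.connSeps_toTreeDecomp htop⟩

end Decomposition

/-- **Duality theorem for combs in terms of tree-decompositions** (Theorem 3.1).
Exactly one of the following holds: (i) `G` contains a comb attached to `U`; (ii) `G` has a
rayless tree-decomposition into parts each containing at most finitely many vertices from
`U` and whose parts at non-leaves are all finite.  Moreover, the tree-decomposition in (ii)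
can be chosen with connected separators. -/
theorem comb_duality_treeDecomp {V : Type u} (G : SimpleGraph V)
    (hG : G.Connected) (U : Set V) :
    Xor' (HasComb G U)
        (∃ (ι : Type u) (D : TreeDecomp G ι), RaylessTree D.tree ∧
          (∀ t, (D.part t ∩ U).Finite) ∧
          (∀ t, ¬ IsLeafNode D.tree t → (D.part t).Finite)) ∧
      (¬ HasComb G U →
        ∃ (ι : Type u) (D : TreeDecomp G ι), RaylessTree D.tree ∧
          (∀ t, (D.part t ∩ U).Finite) ∧
          (∀ t, ¬ IsLeafNode D.tree t → (D.part t).Finite) ∧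
          D.ConnSeps) := by
  refine ⟨?_, exists_treeDecomp_of_not_hasComb hG⟩
  by_cases hc : HasComb G U
  · exact Or.inl ⟨hc, fun ⟨_, D, hrl, hU, hfin⟩ => D.not_hasComb hrl hU hfin hc⟩
  · obtain ⟨ι, D, hrl, hU, hfin, -⟩ := exists_treeDecomp_of_not_hasComb hG hc
    exact Or.inr ⟨⟨ι, D, hrl, hU, hfin⟩, hc⟩

end StarsCombs
end

section
/- Let G be any graph. If T ⊆ G is a rooted tree that contains a vertex set W cofinally, then the set of ends of G lying in the closure of V(T) equals the set of ends of G lying in the closure of W, i.e. ∂_Ω T = ∂_Ω W. -/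
/-! Basic notions for the theory of stars and combs in infinite graphs. -/

universe u

open SimpleGraph

/-!
A comb attached to `V(T)` can be turned into a comb attached to `W` with the same spine. Given
finitely many vertices `F` to avoid, only finitely many comb paths meet `F` or end at a tooth
below some vertex of `F` (down-closures in a rooted tree are finite). Along any other comb path,
continue inside `T` from its tooth `t` up to some `w ∈ W` above `t`: every vertex of that tree path
lies above `t`, hence outside `F`. Choosing such spine–`W` paths greedily, each avoiding all
previously chosen ones, yields the disjoint paths of the new comb.
-/

namespace SimpleGraph

variable {V : Type*} {G : SimpleGraph V}

theorem Walk.exists_walk_meeting_set_only_at_start {S : Set V} {a b : V} (q : G.Walk a b)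
    (hq : ∃ x ∈ q.support, x ∈ S) :
    ∃ a' ∈ S, ∃ p : G.Walk a' b, p.support ⊆ q.support ∧ ∀ x ∈ p.support, x ∈ S → x = a' := by
  induction q with
  | nil =>
    obtain ⟨x, hx, hxS⟩ := hq
    rw [Walk.support_nil, List.mem_singleton] at hx
    exact ⟨_, hx ▸ hxS, Walk.nil, fun _ h => h, fun y hy _ => List.mem_singleton.1 hy⟩
  | @cons a c b h q ih =>
    by_cases hqS : ∃ x ∈ q.support, x ∈ S
    · obtain ⟨a', ha', p, hsub, honly⟩ := ih hqS
      exact ⟨a', ha', p, fun _ hx => List.mem_cons_of_mem _ (hsub hx), honly⟩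
    · have haS : a ∈ S := by
        obtain ⟨x, hx, hxS⟩ := hq
        rcases List.mem_cons.1 hx with rfl | hx
        · exact hxS
        · exact absurd ⟨x, hx, hxS⟩ hqS
      refine ⟨a, haS, Walk.cons h q, fun _ h => h, fun x hx hxS => ?_⟩
      rcases List.mem_cons.1 hx with rfl | hx
      · rfl
      · exact absurd ⟨x, hx, hxS⟩ hqS

theorem IsAcyclic.mem_support_of_mem_support_dropUntil [DecidableEq V] (hG : G.IsAcyclic)
    {r w t x : V} {P : G.Walk r w} (hP : P.IsPath) (ht : t ∈ P.support)
    (hx : x ∈ (P.dropUntil t ht).support) {p : G.Walk r x} (hp : p.IsPath) : t ∈ p.support := by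
  have hP' : ((P.takeUntil t ht).append ((P.dropUntil t ht).takeUntil x hx)).IsPath := by
    refine Walk.IsPath.of_append_left (q := (P.dropUntil t ht).dropUntil x hx) ?_
    rwa [← Walk.append_assoc, Walk.take_spec, Walk.take_spec]
  have hpP' : p = _ := congrArg Subtype.val ((hG.subsingleton_path r x).elim ⟨p, hp⟩ ⟨_, hP'⟩)
  rw [hpP', Walk.mem_support_append_iff]
  exact Or.inl (Walk.end_mem_support _)

end SimpleGraph

namespace Finset

variable {α : Type*} [DecidableEq α]

def unionIterate (f : Finset α → Finset α) (k : ℕ) : Finset α := (fun A => A ∪ f A)^[k] ∅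

theorem unionIterate_succ (f : Finset α → Finset α) (k : ℕ) :
    unionIterate f (k + 1) = unionIterate f k ∪ f (unionIterate f k) :=
  Function.iterate_succ_apply' _ _ _

theorem monotone_unionIterate (f : Finset α → Finset α) : Monotone (unionIterate f) :=
  monotone_nat_of_le_succ fun k => (unionIterate_succ f k).symm ▸ subset_union_left

theorem pairwise_disjoint_unionIterate {f : Finset α → Finset α} (hf : ∀ A, Disjoint (f A) A) :
    Pairwise (Function.onFun Disjoint fun k => f (unionIterate f k)) := by
  refine Pairwise.of_lt fun j k hjk => (hf _).symm.mono_left ?_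
  calc f (unionIterate f j) ⊆ unionIterate f (j + 1) := by
        rw [unionIterate_succ]; exact subset_union_right
    _ ⊆ unionIterate f k := monotone_unionIterate f hjk

end Finset

namespace StarsCombs

variable {V : Type u} {G : SimpleGraph V}

def Comb.mono {U U' : Set V} (c : Comb G U) (h : U ⊆ U') : Comb G U' :=
  { c with tooth_mem := fun n => h (c.tooth_mem n) }

theorem InClosure.mono {U U' : Set V} {r : ℕ → V} (hr : InClosure G U r) (h : U ⊆ U') :
    InClosure G U' r := by
  obtain ⟨c, hc⟩ := hr
  exact ⟨c.mono h, hc⟩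

theorem Comb.finite_setOf_exists_mem_path_s16 {U X : Set V} (c : Comb G U) (hX : X.Finite) :
    {n | ∃ x ∈ (c.path n).support, x ∈ X}.Finite := by
  have hsub : {n | ∃ x ∈ (c.path n).support, x ∈ X} ⊆ ⋃ x ∈ X, {n | x ∈ (c.path n).support} :=
    fun n ⟨x, hxn, hxX⟩ => Set.mem_biUnion hxX hxn
  refine (hX.biUnion fun x _ => ?_).subset hsub
  refine Set.Subsingleton.finite fun m hm n hn => ?_
  by_contra hmn
  exact c.paths_disjoint m n hmn x hm hn

theorem Comb.exists_spine_eq_of_forall_finset {U : Set V} {sp : ℕ → V} (hsp : IsRay G sp)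
    (h : ∀ F : Finset V, ∃ (m : ℕ) (w : V) (q : G.Walk (sp m) w), w ∈ U ∧ q.IsPath ∧
      (∀ x ∈ q.support, x ∉ F) ∧ ∀ x ∈ q.support, x ∈ Set.range sp → x = sp m) :
    ∃ c : Comb G U, c.spine = sp := by
  classical
  choose m w q hwU hq hqF hqsp using h
  set A := Finset.unionIterate fun F => (q F).support.toFinset
  have hdisj := Finset.pairwise_disjoint_unionIterate fun F =>
    Finset.disjoint_left.2 fun x hx => hqF F x (List.mem_toFinset.1 hx)
  refine ⟨⟨sp, hsp, fun k => m (A k), fun k => w (A k), fun k => hwU (A k), fun k => q (A k),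
    fun k => hq (A k), fun k => hqsp (A k), fun j k hjk x hxj hxk => ?_⟩, rfl⟩
  exact Finset.disjoint_left.1 (hdisj hjk) (List.mem_toFinset.2 hxj) (List.mem_toFinset.2 hxk)

namespace RootedTree

theorem finite_setOf_tle (T : RootedTree G) (v : V) : {x | T.tle x v}.Finite := by
  by_cases hv : v ∈ T.sub.verts
  · obtain ⟨P⟩ := T.isTree.connected.preconnected ⟨T.root, T.root_mem⟩ ⟨v, hv⟩
    classical
    refine (List.finite_toSet (P.bypass.support.map Subtype.val)).subset ?_
    rintro x ⟨hx, _, hP⟩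
    exact List.mem_map.2 ⟨⟨x, hx⟩, hP P.bypass P.bypass_isPath, rfl⟩
  · exact Set.finite_empty.subset fun x ⟨_, hv', _⟩ => hv hv'

theorem exists_walk_of_tle {T : RootedTree G} {t w : V} (h : T.tle t w) :
    ∃ p : G.Walk t w, ∀ x ∈ p.support, T.tle t x := by
  classical
  obtain ⟨ht, hw, hall⟩ := h
  obtain ⟨P₀⟩ := T.isTree.connected.preconnected ⟨T.root, T.root_mem⟩ ⟨w, hw⟩
  have htP : (⟨t, ht⟩ : T.sub.verts) ∈ P₀.bypass.support := hall _ P₀.bypass_isPath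
  refine ⟨(P₀.bypass.dropUntil _ htP).map T.sub.hom, fun x hx => ?_⟩
  obtain ⟨y, hy, rfl⟩ := List.mem_map.1 ((Walk.support_map _ _) ▸ hx)
  exact ⟨ht, y.2, fun p hp =>
    IsAcyclic.mem_support_of_mem_support_dropUntil T.isTree.isAcyclic P₀.bypass_isPath htP hy hp⟩

theorem ContainsCofinally.exists_spine_path_avoiding {T : RootedTree G} {W : Set V}
    (hW : T.ContainsCofinally W) (c : Comb G T.sub.verts) (F : Finset V) :
    ∃ (m : ℕ) (w : V) (q : G.Walk (c.spine m) w), w ∈ W ∧ q.IsPath ∧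
      (∀ x ∈ q.support, x ∉ F) ∧ ∀ x ∈ q.support, x ∈ Set.range c.spine → x = c.spine m := by
  classical
  set X := (F : Set V) ∪ ⋃ v ∈ (F : Set V), {x | T.tle x v}
  have hX : X.Finite :=
    F.finite_toSet.union (F.finite_toSet.biUnion fun v _ => T.finite_setOf_tle v)
  obtain ⟨n, hn⟩ := (c.finite_setOf_exists_mem_path_s16 hX).infinite_compl.nonempty
  have hpathX : ∀ x ∈ (c.path n).support, x ∉ X := fun x hx hxX => hn ⟨x, hx, hxX⟩
  obtain ⟨w, hwW, htw⟩ := hW.2 (c.tooth n) (c.tooth_mem n)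
  obtain ⟨p, hp⟩ := exists_walk_of_tle htw
  have hpF : ∀ x ∈ p.support, x ∉ F := fun x hx hxF =>
    hpathX _ (c.path n).end_mem_support (Or.inr (Set.mem_biUnion hxF (hp x hx)))
  obtain ⟨a, ⟨m, rfl⟩, q, hqsub, hqsp⟩ :=
    ((c.path n).append p).exists_walk_meeting_set_only_at_start (S := Set.range c.spine)
      ⟨_, Walk.start_mem_support _, c.start n, rfl⟩
  have hbypass := q.support_bypass_subset_support
  refine ⟨m, w, q.bypass, hwW, q.bypass_isPath, fun x hx hxF => ?_, fun x hx => hqsp x (hbypass hx)⟩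
  rcases (Walk.mem_support_append_iff _ _).1 (hqsub (hbypass hx)) with h | h
  · exact hpathX x h (Or.inl hxF)
  · exact hpF x h hxF

end RootedTree

/-- If `T ⊆ G` is a rooted tree that contains the vertex set `W` cofinally, then the ends of
`G` in the closure of `V(T)` are exactly the ends of `G` in the closure of `W`, i.e.
`∂_Ω T = ∂_Ω W` (Lemma 2.4). -/
theorem closure_eq_closure_of_containsCofinally {V : Type u} (G : SimpleGraph V)
    (T : RootedTree G) (W : Set V) (hW : T.ContainsCofinally W) :
    ∀ r, IsRay G r → (InClosure G T.sub.verts r ↔ InClosure G W r) := by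
  intro r _
  constructor
  · rintro ⟨c, hc⟩
    obtain ⟨c', hc'⟩ := Comb.exists_spine_eq_of_forall_finset c.spine_ray
      (hW.exists_spine_path_avoiding c)
    exact ⟨c', hc' ▸ hc⟩
  · exact fun h => h.mono hW.1

end StarsCombs
end
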